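/- arXiv:math/0111222 — 10 statements merged into one kernel-verified Lean document; each statement's English description precedes it below -/
import Mathlib

section
/- Proposition (face compatibility of the simplicial vector fields W_k). For all integers 0 ≤ l ≤ k and every monotone nondecreasing map ι : {0,…,l} → {0,…,k}, let P : ℝ^{l+1} → ℝ^{k+1} be the linear map defined by (P x)_m = Σ_{j : ι(j) = m} x_j. Then W_k(P x) = P (W_l(x)) for every x ∈ ℝ^{l+1}. (In particular, taking ι strictly increasing, W_k is tangential to every face of the standard simplex Δ_k.) -/
open Finset

/-- The simplicial vector field `W_k` on `ℝ^{k+1}`, given componentwise by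
`(W_k x)_m = x_m * (∑_{i<m} x_i − ∑_{i>m} x_i)`. -/
noncomputable def Wfield (k : ℕ) (x : Fin (k + 1) → ℝ) : Fin (k + 1) → ℝ :=
  fun m => x m * ((∑ i ∈ univ.filter (fun i => i < m), x i)
                - (∑ i ∈ univ.filter (fun i => m < i), x i))

lemma fiber_sum {l k : ℕ} (ι : Fin (l+1) → Fin (k+1)) (x : Fin (l+1) → ℝ)
    (p : Fin (k+1) → Prop) [DecidablePred p] :
    ∑ i ∈ univ.filter p, ∑ j ∈ univ.filter (fun j => ι j = i), x j
      = ∑ j ∈ univ.filter (fun j => p (ι j)), x j := by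
  classical
  calc ∑ i ∈ univ.filter p, ∑ j ∈ univ.filter (fun j => ι j = i), x j
      = ∑ i ∈ univ.filter p, ∑ j : Fin (l+1), if ι j = i then x j else 0 := by
        refine sum_congr rfl fun i _ => ?_
        rw [Finset.sum_filter]
    _ = ∑ j : Fin (l+1), ∑ i ∈ univ.filter p, if ι j = i then x j else 0 :=
        Finset.sum_comm
    _ = ∑ j ∈ univ.filter (fun j => p (ι j)), x j := by
        rw [Finset.sum_filter]
        refine sum_congr rfl fun j _ => ?_
        rw [Finset.sum_ite_eq (univ.filter p) (ι j) (fun _ => x j)]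
        simp

/-- Face compatibility of the simplicial vector fields `W_k`: for every monotone
nondecreasing `ι : Fin (l+1) → Fin (k+1)` and the induced linear map
`(P x)_m = ∑_{j : ι j = m} x_j`, one has `W_k (P x) = P (W_l x)`. -/
theorem Wfield_face_compat (k l : ℕ) (hlk : l ≤ k)
    (ι : Fin (l + 1) → Fin (k + 1)) (hι : Monotone ι)
    (P : (Fin (l + 1) → ℝ) → (Fin (k + 1) → ℝ))
    (hP : ∀ (x : Fin (l + 1) → ℝ) (m : Fin (k + 1)),
      P x m = ∑ j ∈ univ.filter (fun j => ι j = m), x j)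
    (x : Fin (l + 1) → ℝ) :
    Wfield k (P x) = P (Wfield l x) := by
  classical
  funext m
  set S : Finset (Fin (l+1)) := univ.filter (fun j => ι j = m) with hS
  set A : ℝ := ∑ j ∈ univ.filter (fun j => ι j < m), x j with hA
  set B : ℝ := ∑ j ∈ univ.filter (fun j => m < ι j), x j with hB
  -- sums of P x over indices < m and > m
  have hlt : ∑ i ∈ univ.filter (fun i => i < m), P x i = A := by
    rw [hA]; rw [← fiber_sum ι x (fun i => i < m)]
    exact sum_congr rfl fun i _ => hP x i
  have hgt : ∑ i ∈ univ.filter (fun i => m < i), P x i = B := by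
    rw [hB]; rw [← fiber_sum ι x (fun i => m < i)]
    exact sum_congr rfl fun i _ => hP x i
  -- splitting lemmas for j ∈ S
  have hsplit_lt : ∀ j ∈ S, ∑ a ∈ univ.filter (fun a => a < j), x a
      = A + ∑ a ∈ S.filter (fun a => a < j), x a := by
    intro j hj
    have hjm : ι j = m := by simpa [hS] using hj
    have hset : univ.filter (fun a => a < j)
        = univ.filter (fun a => ι a < m) ∪ S.filter (fun a => a < j) := by
      ext a
      simp only [mem_union, mem_filter, mem_univ, true_and, hS]
      constructor
      · intro haj
        rcases lt_or_eq_of_le (hjm ▸ hι haj.le) with h | h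
        · exact Or.inl h
        · exact Or.inr ⟨h, haj⟩
      · rintro (h | ⟨h1, h2⟩)
        · by_contra hc
          exact absurd (hjm ▸ hι (le_of_not_gt hc)) (not_le_of_gt h)
        · exact h2
    have hdisj : Disjoint (univ.filter (fun a => ι a < m))
        (S.filter (fun a => a < j)) := by
      rw [Finset.disjoint_left]
      intro a ha hb
      simp only [mem_filter, mem_univ, true_and, hS] at ha hb
      exact absurd hb.1 (ne_of_lt ha)
    rw [hset, Finset.sum_union hdisj, hA]
  have hsplit_gt : ∀ j ∈ S, ∑ a ∈ univ.filter (fun a => j < a), x a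
      = B + ∑ a ∈ S.filter (fun a => j < a), x a := by
    intro j hj
    have hjm : ι j = m := by simpa [hS] using hj
    have hset : univ.filter (fun a => j < a)
        = univ.filter (fun a => m < ι a) ∪ S.filter (fun a => j < a) := by
      ext a
      simp only [mem_union, mem_filter, mem_univ, true_and, hS]
      constructor
      · intro haj
        rcases lt_or_eq_of_le (hjm ▸ hι haj.le) with h | h
        · exact Or.inl h
        · exact Or.inr ⟨h.symm, haj⟩
      · rintro (h | ⟨h1, h2⟩)
        · by_contra hc
          exact absurd (hjm ▸ hι (le_of_not_gt hc)) (not_le_of_gt h)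
        · exact h2
    have hdisj : Disjoint (univ.filter (fun a => m < ι a))
        (S.filter (fun a => j < a)) := by
      rw [Finset.disjoint_left]
      intro a ha hb
      simp only [mem_filter, mem_univ, true_and, hS] at ha hb
      exact absurd hb.1.symm (ne_of_lt ha)
    rw [hset, Finset.sum_union hdisj, hB]
  -- the antisymmetric cancellation
  have hcancel : ∑ j ∈ S, x j * (∑ a ∈ S.filter (fun a => a < j), x a)
      = ∑ j ∈ S, x j * (∑ a ∈ S.filter (fun a => j < a), x a) := by
    have h1 : ∑ j ∈ S, x j * (∑ a ∈ S.filter (fun a => a < j), x a)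
        = ∑ j ∈ S, ∑ a ∈ S, if a < j then x j * x a else 0 := by
      refine sum_congr rfl fun j _ => ?_
      rw [Finset.mul_sum, Finset.sum_filter]
    have h2 : ∑ j ∈ S, x j * (∑ a ∈ S.filter (fun a => j < a), x a)
        = ∑ j ∈ S, ∑ a ∈ S, if j < a then x j * x a else 0 := by
      refine sum_congr rfl fun j _ => ?_
      rw [Finset.mul_sum, Finset.sum_filter]
    rw [h1, h2, Finset.sum_comm]
    refine sum_congr rfl fun j _ => sum_congr rfl fun a _ => ?_
    rw [mul_comm]
  -- put it together
  have hPm : P x m = ∑ j ∈ S, x j := by rw [hP]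
  have hRHS : P (Wfield l x) m = ∑ j ∈ S, Wfield l x j := by rw [hP]
  rw [hRHS]
  show P x m * ((∑ i ∈ univ.filter (fun i => i < m), P x i)
      - ∑ i ∈ univ.filter (fun i => m < i), P x i) = _
  rw [hlt, hgt, hPm]
  calc (∑ j ∈ S, x j) * (A - B)
      = ∑ j ∈ S, x j * (A - B) := by rw [Finset.sum_mul]
    _ = ∑ j ∈ S, Wfield l x j := ?_
  have : ∑ j ∈ S, x j * (A - B)
      = ∑ j ∈ S, (Wfield l x j
          - (x j * (∑ a ∈ S.filter (fun a => a < j), x a)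
             - x j * (∑ a ∈ S.filter (fun a => j < a), x a))) := by
    refine sum_congr rfl fun j hj => ?_
    unfold Wfield
    rw [hsplit_lt j hj, hsplit_gt j hj]
    ring
  rw [this, Finset.sum_sub_distrib, Finset.sum_sub_distrib, hcancel]
  ring
end

section
/- Lemma (Lyapunov inequality for W_k). For every x ∈ ℝ^{k+1} one has Σ_{m=0}^k m · (W_k(x))_m = Σ_{0≤i<j≤k} (j−i) · x_i · x_j. Moreover, if x ∈ Δ_k then this quantity is ≥ 0, and it equals 0 if and only if x is one of the vertices e_0, …, e_k. (That is, the derivative of the linear function h_k(x) = Σ_j j·x_j along W_k is nonnegative on Δ_k and vanishes only at the vertices.) -/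
open Finset

/-- Lyapunov inequality for `W_k`: the derivative of `h_k(x) = ∑_j j·x_j` along `W_k`,
namely `∑_m m·(W_k x)_m`, equals `∑_{i<j} (j−i)·x_i·x_j`; it is nonnegative on the
standard simplex and vanishes there exactly at the vertices. -/
theorem Wfield_lyapunov (k : ℕ) (x : Fin (k + 1) → ℝ) :
    (∑ m : Fin (k + 1), ((m : ℕ) : ℝ) * Wfield k x m)
      = (∑ i : Fin (k + 1), ∑ j ∈ univ.filter (fun j => i < j),
          (((j : ℕ) : ℝ) - ((i : ℕ) : ℝ)) * x i * x j)
    ∧ (x ∈ stdSimplex ℝ (Fin (k + 1)) →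
        0 ≤ (∑ m : Fin (k + 1), ((m : ℕ) : ℝ) * Wfield k x m)
        ∧ ((∑ m : Fin (k + 1), ((m : ℕ) : ℝ) * Wfield k x m) = 0 ↔
             ∃ j : Fin (k + 1), x = Pi.single j 1)) := by
  have swap : ∀ f : Fin (k + 1) → Fin (k + 1) → ℝ,
      (∑ m : Fin (k + 1), ∑ i ∈ univ.filter (fun i => i < m), f i m)
      = ∑ i : Fin (k + 1), ∑ m ∈ univ.filter (fun m => i < m), f i m := by
    intro f
    simp_rw [Finset.sum_filter]
    exact Finset.sum_comm
  have heq : (∑ m : Fin (k + 1), ((m : ℕ) : ℝ) * Wfield k x m)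
      = (∑ i : Fin (k + 1), ∑ j ∈ univ.filter (fun j => i < j),
          (((j : ℕ) : ℝ) - ((i : ℕ) : ℝ)) * x i * x j) := by
    unfold Wfield
    have step : (∑ m : Fin (k + 1), ((m : ℕ) : ℝ) *
          (x m * ((∑ i ∈ univ.filter (fun i => i < m), x i)
                - (∑ i ∈ univ.filter (fun i => m < i), x i))))
        = (∑ m : Fin (k + 1), ((∑ i ∈ univ.filter (fun i => i < m), ((m : ℕ) : ℝ) * x m * x i)
            - ∑ i ∈ univ.filter (fun i => m < i), ((m : ℕ) : ℝ) * x m * x i)) := by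
      refine Finset.sum_congr rfl fun m _ => ?_
      rw [← Finset.mul_sum, ← Finset.mul_sum]
      ring
    rw [step, Finset.sum_sub_distrib,
      swap (fun i m => ((m : ℕ) : ℝ) * x m * x i), ← Finset.sum_sub_distrib]
    refine Finset.sum_congr rfl fun i _ => ?_
    rw [← Finset.sum_sub_distrib]
    refine Finset.sum_congr rfl fun j hj => ?_
    ring
  refine ⟨heq, fun hx => ?_⟩
  have hterm : ∀ i j : Fin (k + 1), i < j →
      0 ≤ (((j : ℕ) : ℝ) - ((i : ℕ) : ℝ)) * x i * x j := by
    intro i j hij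
    have h1 : (0 : ℝ) ≤ ((j : ℕ) : ℝ) - ((i : ℕ) : ℝ) := by
      have : (i : ℕ) ≤ (j : ℕ) := le_of_lt hij
      simpa [sub_nonneg] using (Nat.cast_le (α := ℝ)).2 this
    exact mul_nonneg (mul_nonneg h1 (hx.1 i)) (hx.1 j)
  have hnn : 0 ≤ (∑ m : Fin (k + 1), ((m : ℕ) : ℝ) * Wfield k x m) := by
    rw [heq]
    exact Finset.sum_nonneg fun i _ => Finset.sum_nonneg fun j hj =>
      hterm i j (Finset.mem_filter.1 hj).2
  refine ⟨hnn, ?_⟩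
  constructor
  · intro h0
    rw [heq] at h0
    have hall : ∀ i j : Fin (k + 1), i < j → x i * x j = 0 := by
      intro i j hij
      have h1 := (Finset.sum_eq_zero_iff_of_nonneg (fun i _ =>
        Finset.sum_nonneg fun j hj => hterm i j (Finset.mem_filter.1 hj).2)).1 h0 i (mem_univ i)
      have h2 := (Finset.sum_eq_zero_iff_of_nonneg (fun j hj =>
        hterm i j (Finset.mem_filter.1 hj).2)).1 h1 j (by simp [hij])
      have hpos : (0 : ℝ) < ((j : ℕ) : ℝ) - ((i : ℕ) : ℝ) := by
        have : (i : ℕ) < (j : ℕ) := hij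
        have := (Nat.cast_lt (α := ℝ)).2 this
        linarith
      have : x i * x j = 0 := by
        by_contra hne
        exact hne (by
          have := h2
          field_simp at this
          rcases mul_eq_zero.1 (by rw [mul_assoc] at h2; exact h2) with h | h
          · exact absurd h (ne_of_gt hpos)
          · exact h)
      exact this
    obtain ⟨j, hj⟩ : ∃ j : Fin (k + 1), x j ≠ 0 := by
      by_contra h
      push_neg at h
      have := hx.2
      simp [h] at this
    refine ⟨j, funext fun i => ?_⟩
    rcases eq_or_ne i j with rfl | hne
    · have hothers : ∀ b ∈ (univ : Finset (Fin (k + 1))), b ≠ i → x b = 0 := by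
        intro b _ hb
        rcases lt_or_gt_of_ne hb with h | h
        · rcases mul_eq_zero.1 (hall b i h) with h' | h'
          · exact h'
          · exact absurd h' hj
        · rcases mul_eq_zero.1 (hall i b h) with h' | h'
          · exact absurd h' hj
          · exact h'
      have hsum : (∑ b : Fin (k + 1), x b) = x i :=
        Finset.sum_eq_single i (fun b hb hbne => hothers b hb hbne)
          (fun h => absurd (mem_univ i) h)
      have hx1 : x i = 1 := by rw [← hsum]; exact hx.2
      simp [Pi.single_eq_same, hx1]
    · rcases lt_or_gt_of_ne hne with h | h
      · rcases mul_eq_zero.1 (hall i j h) with h' | h'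
        · simp [Pi.single_eq_of_ne hne, h']
        · exact absurd h' hj
      · rcases mul_eq_zero.1 (hall j i h) with h' | h'
        · exact absurd h' hj
        · simp [Pi.single_eq_of_ne hne, h']
  · rintro ⟨j, rfl⟩
    rw [heq]
    refine Finset.sum_eq_zero fun i _ => Finset.sum_eq_zero fun j' hj' => ?_
    have hij : i < j' := (Finset.mem_filter.1 hj').2
    rcases eq_or_ne i j with rfl | hne
    · have : j' ≠ i := ne_of_gt hij
      simp [Pi.single_eq_of_ne this]
    · simp [Pi.single_eq_of_ne hne]
end

section
/- Proposition (zeros of W_k). For x ∈ Δ_k, one has W_k(x) = 0 if and only if x = e_j for some j ∈ {0,…,k}; that is, the vector field W_k vanishes on the standard simplex exactly at its vertices. -/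
open Finset

/-- Zeros of `W_k`: on the standard simplex, `W_k` vanishes exactly at the
vertices `e_0, …, e_k`. -/
theorem Wfield_zeros (k : ℕ) (x : Fin (k + 1) → ℝ)
    (hx : x ∈ stdSimplex ℝ (Fin (k + 1))) :
    Wfield k x = 0 ↔ ∃ j : Fin (k + 1), x = Pi.single j 1 := by
  obtain ⟨hnn, hsum⟩ := hx
  constructor
  · intro h
    -- the set of indices where x is nonzero is nonempty
    have hT : (univ.filter (fun i => x i ≠ 0)).Nonempty := by
      by_contra hc
      rw [Finset.not_nonempty_iff_eq_empty, Finset.filter_eq_empty_iff] at hc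
      have : ∑ i, x i = 0 := Finset.sum_eq_zero (fun i hi => by
        have := hc hi; simpa using this)
      rw [hsum] at this; norm_num at this
    set j := (univ.filter (fun i => x i ≠ 0)).min' hT with hj
    have hjmem : j ∈ univ.filter (fun i => x i ≠ 0) := Finset.min'_mem _ hT
    have hxj : x j ≠ 0 := (Finset.mem_filter.mp hjmem).2
    have hmin : ∀ i, x i ≠ 0 → j ≤ i := fun i hi =>
      Finset.min'_le _ i (Finset.mem_filter.mpr ⟨Finset.mem_univ i, hi⟩)
    have hlt : ∀ i, i < j → x i = 0 := by
      intro i hi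
      by_contra hc
      exact absurd (hmin i hc) (not_le.mpr hi)
    have hlow : (∑ i ∈ univ.filter (fun i => i < j), x i) = 0 :=
      Finset.sum_eq_zero (fun i hi => hlt i (Finset.mem_filter.mp hi).2)
    have hj0 : Wfield k x j = 0 := by rw [h]; rfl
    have hhigh : (∑ i ∈ univ.filter (fun i => j < i), x i) = 0 := by
      unfold Wfield at hj0
      rw [hlow] at hj0
      rcases mul_eq_zero.mp hj0 with h1 | h2
      · exact absurd h1 hxj
      · linarith
    have hgt : ∀ i, j < i → x i = 0 := by
      intro i hi
      have := (Finset.sum_eq_zero_iff_of_nonneg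
        (fun i _ => hnn i)).mp hhigh i (Finset.mem_filter.mpr ⟨Finset.mem_univ i, hi⟩)
      exact this
    have hne : ∀ i, i ≠ j → x i = 0 := by
      intro i hine
      rcases lt_or_gt_of_ne hine with h1 | h1
      · exact hlt i h1
      · exact hgt i h1
    refine ⟨j, ?_⟩
    funext i
    by_cases hij : i = j
    · have hs : ∑ b, x b = x j := Finset.sum_eq_single_of_mem j (Finset.mem_univ j)
        (fun b _ hb => hne b hb)
      rw [hs] at hsum
      rw [hij, hsum, Pi.single_eq_same]
    · rw [hne i hij, Pi.single_eq_of_ne hij]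
  · rintro ⟨j, rfl⟩
    funext m
    unfold Wfield
    by_cases hmj : m = j
    · subst hmj
      have h1 : (∑ i ∈ univ.filter (fun i => i < m), Pi.single m (1:ℝ) i) = 0 :=
        Finset.sum_eq_zero (fun i hi =>
          Pi.single_eq_of_ne (ne_of_lt (Finset.mem_filter.mp hi).2) 1)
      have h2 : (∑ i ∈ univ.filter (fun i => m < i), Pi.single m (1:ℝ) i) = 0 :=
        Finset.sum_eq_zero (fun i hi =>
          Pi.single_eq_of_ne (ne_of_gt (Finset.mem_filter.mp hi).2) 1)
      simp [h1, h2]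
    · rw [Pi.single_eq_of_ne hmj]
      simp
end

section
/- Proposition (non-degenerate linearization of W_k at the vertices). The map W_k : ℝ^{k+1} → ℝ^{k+1} is differentiable, and for each vertex e_j its Fréchet derivative D W_k(e_j) satisfies: D W_k(e_j)(e_l − e_j) = e_l − e_j for every l > j, D W_k(e_j)(e_l − e_j) = −(e_l − e_j) for every l < j, and D W_k(e_j)(e_j) = 0. Consequently the k vectors e_l − e_j (l ≠ j) form a basis of the tangent hyperplane {v ∈ ℝ^{k+1} : Σ_m v_m = 0} consisting of eigenvectors of D W_k(e_j) with eigenvalues ±1; the zero of W_k at e_j is non-degenerate, with stable subspace spanned by {e_l − e_j : l < j} and unstable subspace spanned by {e_l − e_j : l > j}. -/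
open Finset

noncomputable def Lmap (k : ℕ) (m : Fin (k + 1)) : (Fin (k + 1) → ℝ) →L[ℝ] ℝ :=
  (∑ i ∈ univ.filter (fun i => i < m), ContinuousLinearMap.proj i)
  - (∑ i ∈ univ.filter (fun i => m < i), ContinuousLinearMap.proj i)

lemma Lmap_apply (k : ℕ) (m : Fin (k + 1)) (x : Fin (k + 1) → ℝ) :
    Lmap k m x = (∑ i ∈ univ.filter (fun i => i < m), x i)
               - (∑ i ∈ univ.filter (fun i => m < i), x i) := by
  simp [Lmap, ContinuousLinearMap.sum_apply]

noncomputable def Dmap (k : ℕ) (a : Fin (k + 1) → ℝ) : (Fin (k + 1) → ℝ) →L[ℝ] (Fin (k + 1) → ℝ) :=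
  ContinuousLinearMap.pi (fun m => a m • Lmap k m + Lmap k m a • ContinuousLinearMap.proj m)

lemma hasD (k : ℕ) (a : Fin (k + 1) → ℝ) : HasFDerivAt (Wfield k) (Dmap k a) a := by
  have : HasFDerivAt (fun x : Fin (k+1) → ℝ => fun m => x m * Lmap k m x) (Dmap k a) a := by
    rw [Dmap, hasFDerivAt_pi]
    intro m
    exact (hasFDerivAt_apply m a).mul (Lmap k m).hasFDerivAt
  convert this using 2 with x
  funext m
  rw [Wfield, Lmap_apply]

lemma Dmap_apply (k : ℕ) (a v : Fin (k + 1) → ℝ) (m : Fin (k + 1)) :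
    Dmap k a v m = a m * Lmap k m v + Lmap k m a * v m := by
  simp [Dmap]

lemma Lmap_single (k : ℕ) (m j : Fin (k + 1)) :
    Lmap k m (Pi.single j 1) = (if j < m then (1:ℝ) else 0) - (if m < j then 1 else 0) := by
  rw [Lmap_apply]
  simp [Pi.single_apply, Finset.sum_ite_eq']

lemma Dmap_single (k : ℕ) (j l : Fin (k + 1)) (hlj : l ≠ j) :
    Dmap k (Pi.single j 1) (Pi.single l 1 - Pi.single j 1)
      = ((if j < l then (1:ℝ) else -1)) • (Pi.single l 1 - Pi.single j 1 : Fin (k+1) → ℝ) := by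
  funext m
  rw [Dmap_apply, map_sub, Lmap_single, Lmap_single]
  have hlj' : (l : ℕ) ≠ (j : ℕ) := fun hh => hlj (Fin.ext hh)
  simp only [Pi.smul_apply, Pi.sub_apply, Pi.single_apply, smul_eq_mul, Fin.lt_def, Fin.ext_iff]
  split_ifs <;> first | ring1 | (exfalso; omega)

lemma Dmap_single_self (k : ℕ) (j : Fin (k + 1)) :
    Dmap k (Pi.single j 1) (Pi.single j 1) = 0 := by
  funext m
  rw [Dmap_apply, Lmap_single]
  simp only [Pi.single_apply, Pi.zero_apply, Fin.lt_def, Fin.ext_iff]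
  split_ifs <;> first | ring1 | (exfalso; omega)

/-- Non-degenerate linearization of `W_k` at the vertices: `W_k` is differentiable,
its Fréchet derivative at a vertex `e_j` fixes `e_l − e_j` for `l > j`, negates
`e_l − e_j` for `l < j`, and kills `e_j`; consequently the vectors `e_l − e_j`
(`l ≠ j`) form a basis of the tangent hyperplane `{v : ∑ v_m = 0}` consisting of
eigenvectors with eigenvalues `±1`. -/
theorem Wfield_linearization (k : ℕ) (j : Fin (k + 1)) :
    Differentiable ℝ (Wfield k) ∧
    (∀ l : Fin (k + 1), j < l →
      fderiv ℝ (Wfield k) (Pi.single j 1) (Pi.single l 1 - Pi.single j 1)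
        = Pi.single l 1 - Pi.single j 1) ∧
    (∀ l : Fin (k + 1), l < j →
      fderiv ℝ (Wfield k) (Pi.single j 1) (Pi.single l 1 - Pi.single j 1)
        = -(Pi.single l 1 - Pi.single j 1)) ∧
    fderiv ℝ (Wfield k) (Pi.single j 1) (Pi.single j 1) = 0 ∧
    LinearIndependent ℝ (fun l : {l : Fin (k + 1) // l ≠ j} =>
      (Pi.single (l : Fin (k + 1)) (1 : ℝ) - Pi.single j 1 : Fin (k + 1) → ℝ)) ∧
    Submodule.span ℝ (Set.range (fun l : {l : Fin (k + 1) // l ≠ j} =>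
        (Pi.single (l : Fin (k + 1)) (1 : ℝ) - Pi.single j 1 : Fin (k + 1) → ℝ)))
      = LinearMap.ker
          (∑ m : Fin (k + 1), (LinearMap.proj m : (Fin (k + 1) → ℝ) →ₗ[ℝ] ℝ)) := by
  have hf := (hasD k (Pi.single j 1)).fderiv
  refine ⟨fun a => (hasD k a).differentiableAt, ?_, ?_, ?_, ?_, ?_⟩
  · intro l hl
    rw [hf, Dmap_single k j l (ne_of_gt hl), if_pos hl, one_smul]
  · intro l hl
    rw [hf, Dmap_single k j l (ne_of_lt hl), if_neg (lt_asymm hl), neg_one_smul]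
  · rw [hf, Dmap_single_self]
  · rw [Fintype.linearIndependent_iff]
    intro g hg l₀
    have h := congrFun hg (l₀ : Fin (k + 1))
    simp only [Finset.sum_apply, Pi.smul_apply, Pi.sub_apply, Pi.single_apply,
      smul_eq_mul, Pi.zero_apply] at h
    rw [if_neg l₀.2] at h
    simpa [Subtype.coe_inj, mul_ite, Finset.sum_ite_eq, Finset.sum_ite_eq', eq_comm] using h
  · apply le_antisymm
    · rw [Submodule.span_le]
      rintro _ ⟨l, rfl⟩
      simp [LinearMap.mem_ker, LinearMap.sum_apply, Finset.sum_sub_distrib,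
        Finset.sum_pi_single']
    · intro v hv
      simp only [LinearMap.mem_ker, LinearMap.sum_apply, LinearMap.proj_apply] at hv
      have hveq : v = ∑ m : Fin (k + 1), v m • (Pi.single m 1 - Pi.single j 1 : Fin (k+1) → ℝ) := by
        funext i
        simp only [Finset.sum_apply, Pi.smul_apply, Pi.sub_apply, Pi.single_apply,
          smul_eq_mul, mul_sub, Finset.sum_sub_distrib]
        rw [Finset.sum_congr rfl (fun m _ => by rw [mul_ite, mul_one, mul_zero]),
            Finset.sum_ite_eq univ i v, if_pos (Finset.mem_univ i)]
        simp [← Finset.sum_mul, hv]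
      rw [hveq]
      apply Submodule.sum_mem
      intro m _
      by_cases hm : m = j
      · subst hm; simp
      · exact Submodule.smul_mem _ _ (Submodule.subset_span ⟨⟨m, hm⟩, rfl⟩)
end

section
/- Lemma (invariance of the simplex and its faces under the flow of W_k). If γ is a trajectory of W_k with γ(0) ∈ Δ_k, then γ(t) ∈ Δ_k for all t ∈ ℝ. Moreover, for each index i ∈ {0,…,k}, if γ_i(0) = 0 then γ_i(t) = 0 for all t ∈ ℝ; hence every face of Δ_k is invariant under the flow of W_k. -/
open Finset

/-!
Each coordinate solves a scalar linear equation `u' = u g` with `g` continuous, so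
`γ_i(t) = γ_i(0) exp (∫₀ᵗ g)`: its sign is preserved and a vanishing coordinate stays zero.
The sum of the coordinates is a first integral, since `W_k = Σ_{i<j} x_i x_j (e_j − e_i)` has
coordinate sum zero.
-/

theorem eq_mul_exp_integral_of_hasDerivAt_mul {u g : ℝ → ℝ} (hg : Continuous g)
    (hu : ∀ t, HasDerivAt u (u t * g t) t) (t : ℝ) :
    u t = u 0 * Real.exp (∫ s in (0 : ℝ)..t, g s) := by
  set G : ℝ → ℝ := fun t => ∫ s in (0 : ℝ)..t, g s
  have hG : ∀ t, HasDerivAt G (g t) t := fun t =>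
    intervalIntegral.integral_hasDerivAt_right (hg.intervalIntegrable 0 t)
      hg.stronglyMeasurable.stronglyMeasurableAtFilter hg.continuousAt
  have hderiv : ∀ s, HasDerivAt (fun t => u t * Real.exp (-G t)) 0 s := fun s =>
    ((hu s).fun_mul (hG s).fun_neg.exp).congr_deriv (by ring)
  have hconst : u t * Real.exp (-G t) = u 0 * Real.exp (-G 0) :=
    is_const_of_deriv_eq_zero (fun x => (hderiv x).differentiableAt)
      (fun x => (hderiv x).deriv) t 0
  have hG0 : G 0 = 0 := intervalIntegral.integral_same
  rw [hG0, neg_zero, Real.exp_zero, mul_one, Real.exp_neg, ← div_eq_mul_inv,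
    div_eq_iff (Real.exp_pos _).ne'] at hconst
  exact hconst

theorem sum_Wfield (k : ℕ) (x : Fin (k + 1) → ℝ) : ∑ m, Wfield k x m = 0 := by
  simp_rw [Wfield, mul_sub, sum_sub_distrib, mul_sum, sub_eq_zero]
  rw [sum_comm' (t' := univ) (s' := fun i => univ.filter (fun m => i < m))
    (by intro m i; simp)]
  exact sum_congr rfl fun i _ => sum_congr rfl fun m _ => mul_comm _ _

section Trajectory

variable {k : ℕ} {γ : ℝ → Fin (k + 1) → ℝ}

theorem Wfield_trajectory_apply_eq (hγ : ∀ t : ℝ, HasDerivAt γ (Wfield k (γ t)) t)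
    (i : Fin (k + 1)) (t : ℝ) :
    γ t i = γ 0 i * Real.exp (∫ s in (0 : ℝ)..t,
      ((∑ j ∈ univ.filter (fun j => j < i), γ s j) -
        ∑ j ∈ univ.filter (fun j => i < j), γ s j)) := by
  have hcont : Continuous γ := continuous_iff_continuousAt.2 fun t => (hγ t).continuousAt
  refine eq_mul_exp_integral_of_hasDerivAt_mul ?_ (fun s => hasDerivAt_pi.1 (hγ s) i) t
  fun_prop

theorem Wfield_trajectory_sum_eq (hγ : ∀ t : ℝ, HasDerivAt γ (Wfield k (γ t)) t) (t : ℝ) :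
    ∑ i, γ t i = ∑ i, γ 0 i := by
  have hderiv : ∀ s, HasDerivAt (fun s => ∑ i, γ s i) 0 s := fun s => by
    simpa only [sum_Wfield] using
      HasDerivAt.fun_sum fun i (_ : i ∈ univ) => hasDerivAt_pi.1 (hγ s) i
  exact is_const_of_deriv_eq_zero (fun s => (hderiv s).differentiableAt)
    (fun s => (hderiv s).deriv) t 0

end Trajectory

/-- Invariance of the simplex and its faces under the flow of `W_k`: a trajectory
starting in `Δ_k` stays in `Δ_k` for all times, and any coordinate vanishing at
time `0` vanishes for all times. -/
theorem Wfield_flow_invariance (k : ℕ) (γ : ℝ → Fin (k + 1) → ℝ)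
    (hγ : ∀ t : ℝ, HasDerivAt γ (Wfield k (γ t)) t)
    (h0 : γ 0 ∈ stdSimplex ℝ (Fin (k + 1))) :
    (∀ t : ℝ, γ t ∈ stdSimplex ℝ (Fin (k + 1))) ∧
    (∀ i : Fin (k + 1), γ 0 i = 0 → ∀ t : ℝ, γ t i = 0) := by
  refine ⟨fun t => ⟨fun i => ?_, ?_⟩, fun i hi t => ?_⟩
  · rw [Wfield_trajectory_apply_eq hγ i t]
    exact mul_nonneg (h0.1 i) (Real.exp_pos _).le
  · rw [Wfield_trajectory_sum_eq hγ t]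
    exact h0.2
  · rw [Wfield_trajectory_apply_eq hγ i t, hi, zero_mul]
end

section
/- Lemma (global flow of W_k on the simplex). For every x ∈ Δ_k there exists a unique trajectory γ : ℝ → ℝ^{k+1} of W_k with γ(0) = x, and this trajectory satisfies γ(t) ∈ Δ_k for all t ∈ ℝ. -/
open Finset

/-! Along `Σ xᵢ = 1`, the cumulative sums `Sⱼ = x₀ + ⋯ + x_{j-1}` of a trajectory of `W_k` obey
the decoupled logistic equations `Sⱼ' = Sⱼ (Sⱼ - 1)`, whose solutions are
`σ(s, t) = s / (s + (1 - s) eᵗ)`. For `x ∈ Δ_k` we have `0 = S₀ ≤ S₁ ≤ ⋯ ≤ S_{k+1} = 1`, and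
`σ(·, t)` fixes `0` and `1` and is monotone on `[0, 1]`, so the differences of the `σ(Sⱼ, t)` form
a global trajectory in `Δ_k` through `x`. Since `W_k` is polynomial, hence locally Lipschitz,
trajectories are determined by their value at `0`. -/

open Real Topology

section Uniqueness

variable {E : Type*} [NormedAddCommGroup E] [NormedSpace ℝ E]

theorem eq_of_hasDerivAt_of_locallyLipschitz {v : E → E} (hv : LocallyLipschitz v)
    {f g : ℝ → E} (hf : ∀ t, HasDerivAt f (v (f t)) t) (hg : ∀ t, HasDerivAt g (v (g t)) t)
    {t₀ : ℝ} (h : f t₀ = g t₀) : f = g := by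
  have hopen : IsOpen {t | f t = g t} := by
    refine isOpen_iff_mem_nhds.2 fun t (ht : f t = g t) => ?_
    obtain ⟨K, U, hU, hK⟩ := hv (f t)
    have hfU : ∀ᶠ s in 𝓝 t, f s ∈ U := (hf t).continuousAt.eventually_mem hU
    have hgU : ∀ᶠ s in 𝓝 t, g s ∈ U := (hg t).continuousAt.eventually_mem (ht ▸ hU)
    exact ODE_solution_unique_of_eventually (v := fun _ => v) (.of_forall fun _ => hK)
      (hfU.mono fun s hs => ⟨hf s, hs⟩) (hgU.mono fun s hs => ⟨hg s, hs⟩) ht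
  have hclosed : IsClosed {t | f t = g t} :=
    isClosed_eq (continuous_iff_continuousAt.2 fun t => (hf t).continuousAt)
      (continuous_iff_continuousAt.2 fun t => (hg t).continuousAt)
  have huniv := IsClopen.eq_univ ⟨hclosed, hopen⟩ ⟨t₀, h⟩
  exact funext fun t => Set.eq_univ_iff_forall.1 huniv t

end Uniqueness

noncomputable def logistic (s t : ℝ) : ℝ := s / (s + (1 - s) * exp t)

theorem logistic_denom_pos {s : ℝ} (h0 : 0 ≤ s) (h1 : s ≤ 1) (t : ℝ) :
    0 < s + (1 - s) * exp t := by
  rcases h0.eq_or_lt with rfl | h0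
  · simpa using exp_pos t
  · nlinarith [exp_pos t]

@[simp] theorem logistic_zero_left (t : ℝ) : logistic 0 t = 0 := by simp [logistic]

@[simp] theorem logistic_one_left (t : ℝ) : logistic 1 t = 1 := by simp [logistic]

@[simp] theorem logistic_zero_right (s : ℝ) : logistic s 0 = s := by simp [logistic]

theorem monotoneOn_logistic (t : ℝ) : MonotoneOn (logistic · t) (Set.Icc 0 1) := by
  intro s ⟨hs0, hs1⟩ s' ⟨hs'0, hs'1⟩ hss'
  simp only [logistic]
  rw [div_le_div_iff₀ (logistic_denom_pos hs0 hs1 t) (logistic_denom_pos hs'0 hs'1 t)]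
  nlinarith [mul_nonneg (sub_nonneg.2 hss') (exp_pos t).le]

theorem hasDerivAt_logistic {s : ℝ} (h0 : 0 ≤ s) (h1 : s ≤ 1) (t : ℝ) :
    HasDerivAt (logistic s) (logistic s t * (logistic s t - 1)) t := by
  have hdenom : HasDerivAt (fun t => s + (1 - s) * exp t) ((1 - s) * exp t) t := by
    simpa using ((hasDerivAt_exp t).const_mul (1 - s)).const_add s
  have hpos := (logistic_denom_pos h0 h1 t).ne'
  refine ((hasDerivAt_const t s).div hdenom hpos).congr_deriv ?_
  simp only [logistic]
  field_simp
  ring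

namespace Fin

variable {M : Type*} {n : ℕ}

theorem partialSum_eq_sum_filter [AddCommMonoid M] (f : Fin n → M) (j : Fin (n + 1)) :
    partialSum f j = ∑ i with i.castSucc < j, f i := by
  induction j using Fin.induction with
  | zero => simp
  | succ j ih =>
    simp only [partialSum_succ, ih, castSucc_lt_castSucc_iff, castSucc_lt_succ_iff,
      filter_gt_eq_Iio, filter_ge_eq_Iic, ← Iio_insert, sum_insert notMem_Iio_self, add_comm]

theorem partialSum_last [AddCommMonoid M] (f : Fin n → M) : partialSum f (last n) = ∑ i, f i := by
  simp [partialSum_eq_sum_filter, castSucc_lt_last]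

theorem sum_filter_lt_eq_partialSum [AddCommMonoid M] (f : Fin n → M) (m : Fin n) :
    ∑ i with i < m, f i = partialSum f m.castSucc := by
  simp [partialSum_eq_sum_filter]

theorem sum_filter_gt_eq_partialSum [AddCommGroup M] (f : Fin n → M) (m : Fin n) :
    ∑ i with m < i, f i = partialSum f (last n) - partialSum f m.succ := by
  rw [partialSum_last, partialSum_eq_sum_filter, ← sum_filter_add_sum_filter_not univ (m < ·)]
  simp [castSucc_lt_succ_iff]

theorem partialSum_sub_castSucc [AddCommGroup M] (g : Fin (n + 1) → M) (j : Fin (n + 1)) :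
    partialSum (fun i => g i.succ - g i.castSucc) j = g j - g 0 := by
  induction j using Fin.induction with
  | zero => simp
  | succ j ih => rw [partialSum_succ, ih]; abel

theorem monotone_partialSum [AddCommMonoid M] [PartialOrder M] [IsOrderedAddMonoid M]
    {f : Fin n → M} (hf : ∀ i, 0 ≤ f i) : Monotone (partialSum f) :=
  monotone_iff_le_succ.2 fun i => by rw [partialSum_succ]; exact le_add_of_nonneg_right (hf i)

end Fin

open Fin

theorem contDiff_Wfield (k : ℕ) : ContDiff ℝ 1 (Wfield k) := by
  refine contDiff_pi.2 fun m => ?_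
  unfold Wfield
  fun_prop

theorem Wfield_apply_eq_partialSum {k : ℕ} {x : Fin (k + 1) → ℝ} (hx : ∑ i, x i = 1)
    (m : Fin (k + 1)) :
    Wfield k x m = partialSum x m.succ * (partialSum x m.succ - 1)
      - partialSum x m.castSucc * (partialSum x m.castSucc - 1) := by
  rw [Wfield, sum_filter_lt_eq_partialSum, sum_filter_gt_eq_partialSum, partialSum_last, hx,
    ← partialSum_right_neg x m]
  ring

noncomputable def simplexFlow (k : ℕ) (x : Fin (k + 1) → ℝ) (t : ℝ) : Fin (k + 1) → ℝ :=
  fun m => logistic (partialSum x m.succ) t - logistic (partialSum x m.castSucc) t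

section SimplexFlow

variable {k : ℕ} {x : Fin (k + 1) → ℝ}

theorem partialSum_mem_Icc (hx : x ∈ stdSimplex ℝ (Fin (k + 1))) (j : Fin (k + 2)) :
    partialSum x j ∈ Set.Icc 0 1 := by
  have hmono := monotone_partialSum hx.1
  refine ⟨?_, ?_⟩
  · simpa using hmono (Fin.zero_le j)
  · simpa [partialSum_last, hx.2] using hmono (Fin.le_last j)

theorem partialSum_simplexFlow (t : ℝ) (j : Fin (k + 2)) :
    partialSum (simplexFlow k x t) j = logistic (partialSum x j) t :=
  (partialSum_sub_castSucc (fun j => logistic (partialSum x j) t) j).trans (by simp)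

theorem simplexFlow_zero : simplexFlow k x 0 = x :=
  funext fun m => by simp [simplexFlow, partialSum_succ]

theorem simplexFlow_mem_stdSimplex (hx : x ∈ stdSimplex ℝ (Fin (k + 1))) (t : ℝ) :
    simplexFlow k x t ∈ stdSimplex ℝ (Fin (k + 1)) := by
  refine ⟨fun m => sub_nonneg.2 ?_, ?_⟩
  · exact monotoneOn_logistic t (partialSum_mem_Icc hx _) (partialSum_mem_Icc hx _)
      (monotone_partialSum hx.1 (castSucc_le_succ m))
  · rw [← partialSum_last, partialSum_simplexFlow, partialSum_last, hx.2, logistic_one_left]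

theorem hasDerivAt_simplexFlow (hx : x ∈ stdSimplex ℝ (Fin (k + 1))) (t : ℝ) :
    HasDerivAt (simplexFlow k x) (Wfield k (simplexFlow k x t)) t := by
  refine hasDerivAt_pi.2 fun m => ?_
  have hlog (j : Fin (k + 2)) :=
    hasDerivAt_logistic (partialSum_mem_Icc hx j).1 (partialSum_mem_Icc hx j).2 t
  rw [Wfield_apply_eq_partialSum (simplexFlow_mem_stdSimplex hx t).2, partialSum_simplexFlow,
    partialSum_simplexFlow]
  exact (hlog m.succ).sub (hlog m.castSucc)

end SimplexFlow

/-- Global flow of `W_k` on the simplex: every `x ∈ Δ_k` is the initial value of a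
unique trajectory of `W_k`, and this trajectory stays in `Δ_k` for all times. -/
theorem Wfield_global_flow (k : ℕ) (x : Fin (k + 1) → ℝ)
    (hx : x ∈ stdSimplex ℝ (Fin (k + 1))) :
    (∃! γ : ℝ → Fin (k + 1) → ℝ,
        (∀ t : ℝ, HasDerivAt γ (Wfield k (γ t)) t) ∧ γ 0 = x) ∧
    (∀ γ : ℝ → Fin (k + 1) → ℝ,
        (∀ t : ℝ, HasDerivAt γ (Wfield k (γ t)) t) → γ 0 = x →
        ∀ t : ℝ, γ t ∈ stdSimplex ℝ (Fin (k + 1))) := by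
  have hunique {γ : ℝ → Fin (k + 1) → ℝ} (hγ : ∀ t, HasDerivAt γ (Wfield k (γ t)) t)
      (hγ0 : γ 0 = x) : γ = simplexFlow k x :=
    eq_of_hasDerivAt_of_locallyLipschitz (contDiff_Wfield k).locallyLipschitz hγ
      (hasDerivAt_simplexFlow hx) (hγ0.trans simplexFlow_zero.symm)
  refine ⟨⟨simplexFlow k x, ⟨hasDerivAt_simplexFlow hx, simplexFlow_zero⟩,
    fun γ ⟨hγ, hγ0⟩ => hunique hγ hγ0⟩, fun γ hγ hγ0 t => ?_⟩
  rw [hunique hγ hγ0]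
  exact simplexFlow_mem_stdSimplex hx t
end

section
/- Lemma (monotonicity of h_k along trajectories). If γ is a trajectory of W_k with γ(t) ∈ Δ_k for all t ∈ ℝ, then the function t ↦ h_k(γ(t)) = Σ_{j=0}^k j · γ_j(t) is monotone nondecreasing on ℝ; moreover it is strictly increasing unless γ is constant, in which case γ is constantly equal to a vertex of Δ_k. -/
open Finset

/-!
The derivative of `h_k` along `W_k` is `∑_{i<m} (m - i) x_i x_m`, which is nonnegative on the
simplex and vanishes there exactly at the vertices. The vertices are equilibria of `W_k`, and
`W_k` is Lipschitz on the compact simplex, so by uniqueness of solutions a trajectory that meets a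
vertex stays there forever. Hence along a nonconstant trajectory the derivative of `h_k ∘ γ` is
positive everywhere.
-/

theorem HasDerivAt.sum_mul_apply {ι : Type*} [Fintype ι] {γ : ℝ → ι → ℝ} {γ' : ι → ℝ} {t : ℝ}
    (hγ : HasDerivAt γ γ' t) (c : ι → ℝ) :
    HasDerivAt (fun t => ∑ j, c j * γ t j) (∑ j, c j * γ' j) t :=
  HasDerivAt.fun_sum fun j _ => ((hasDerivAt_pi.mp hγ) j).const_mul (c j)

theorem stdSimplex.exists_eq_single_of_pairwise_mul_eq_zero {ι : Type*} [Fintype ι]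
    [DecidableEq ι] {x : ι → ℝ} (hx : x ∈ stdSimplex ℝ ι) (h : Pairwise fun i j => x i * x j = 0) :
    ∃ j, x = Pi.single j 1 := by
  obtain ⟨j, hj⟩ : ∃ j, x j ≠ 0 := by
    by_contra! h0
    simpa [h0] using hx.2
  have hzero : ∀ i, i ≠ j → x i = 0 := fun i hij => (mul_eq_zero.mp (h hij)).resolve_right hj
  have hone : x j = 1 := by
    rw [← hx.2, sum_eq_single j (fun i _ hij => hzero i hij) (by simp)]
  refine ⟨j, funext fun i => ?_⟩
  rcases eq_or_ne i j with rfl | hij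
  · simp [hone]
  · simp [hzero i hij, hij]

namespace Wfield

variable {k : ℕ}

theorem sum_mul_eq (x : Fin (k + 1) → ℝ) :
    ∑ j : Fin (k + 1), ((j : ℕ) : ℝ) * Wfield k x j
      = ∑ m : Fin (k + 1), ∑ i ∈ univ.filter (· < m),
          (((m : ℕ) : ℝ) - ((i : ℕ) : ℝ)) * (x i * x m) := by
  have hswap : ∑ m : Fin (k + 1), ∑ i ∈ univ.filter (m < ·), ((m : ℕ) : ℝ) * (x m * x i)
      = ∑ m : Fin (k + 1), ∑ i ∈ univ.filter (· < m), ((i : ℕ) : ℝ) * (x i * x m) := by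
    simp only [sum_filter]
    exact sum_comm
  calc ∑ j : Fin (k + 1), ((j : ℕ) : ℝ) * Wfield k x j
      = ∑ m : Fin (k + 1), ∑ i ∈ univ.filter (· < m), ((m : ℕ) : ℝ) * (x i * x m)
        - ∑ m : Fin (k + 1), ∑ i ∈ univ.filter (m < ·), ((m : ℕ) : ℝ) * (x m * x i) := by
        simp only [Wfield, mul_sub, mul_sum, ← sum_sub_distrib]
        congr! 3
        ring
    _ = _ := by
        simp only [hswap, ← sum_sub_distrib, sub_mul]

theorem sum_mul_nonneg {x : Fin (k + 1) → ℝ} (hx : ∀ i, 0 ≤ x i) :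
    0 ≤ ∑ j : Fin (k + 1), ((j : ℕ) : ℝ) * Wfield k x j := by
  rw [sum_mul_eq]
  refine sum_nonneg fun m _ => sum_nonneg fun i hi => mul_nonneg ?_ (mul_nonneg (hx i) (hx m))
  have : i < m := (mem_filter.mp hi).2
  exact sub_nonneg.mpr (by exact_mod_cast this.le)

theorem pairwise_mul_eq_zero_of_sum_mul_eq_zero {x : Fin (k + 1) → ℝ} (hx : ∀ i, 0 ≤ x i)
    (h : ∑ j : Fin (k + 1), ((j : ℕ) : ℝ) * Wfield k x j = 0) :
    Pairwise fun i m => x i * x m = 0 := by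
  have hlt : ∀ i m, i < m → x i * x m = 0 := by
    intro i m him
    have hterm_nonneg : ∀ m : Fin (k + 1), ∀ i ∈ univ.filter (· < m),
        0 ≤ (((m : ℕ) : ℝ) - ((i : ℕ) : ℝ)) * (x i * x m) := fun m i hi =>
      mul_nonneg (sub_nonneg.mpr (by exact_mod_cast (mem_filter.mp hi).2.le))
        (mul_nonneg (hx i) (hx m))
    rw [sum_mul_eq, sum_eq_zero_iff_of_nonneg fun m _ => sum_nonneg (hterm_nonneg m)] at h
    have := (sum_eq_zero_iff_of_nonneg (hterm_nonneg m)).mp (h m (mem_univ m)) i (by simpa)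
    refine (mul_eq_zero.mp this).resolve_left (sub_ne_zero.mpr ?_)
    exact_mod_cast Fin.val_injective.ne him.ne'
  intro i m hne
  rcases hne.lt_or_gt with h | h
  · exact hlt i m h
  · rw [mul_comm]; exact hlt m i h

theorem single_one (j : Fin (k + 1)) : Wfield k (Pi.single j 1) = 0 := by
  funext m
  simp +contextual [Wfield, Pi.single_apply]

theorem contDiff : ContDiff ℝ 1 (Wfield k) := by
  unfold Wfield
  fun_prop

theorem exists_lipschitzOnWith_stdSimplex :
    ∃ K, LipschitzOnWith K (Wfield k) (stdSimplex ℝ (Fin (k + 1))) :=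
  contDiff.locallyLipschitz.locallyLipschitzOn.exists_lipschitzOnWith_of_compact
    (isCompact_stdSimplex _ _)

theorem trajectory_eq_const_of_eq_single {γ : ℝ → Fin (k + 1) → ℝ}
    (hγ : ∀ t : ℝ, HasDerivAt γ (Wfield k (γ t)) t)
    (hΔ : ∀ t : ℝ, γ t ∈ stdSimplex ℝ (Fin (k + 1))) {t₀ : ℝ} {j : Fin (k + 1)}
    (hj : γ t₀ = Pi.single j 1) :
    γ = fun _ => Pi.single j 1 := by
  obtain ⟨K, hK⟩ := exists_lipschitzOnWith_stdSimplex (k := k)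
  refine ODE_solution_unique_univ (v := fun _ => Wfield k) (fun _ => hK) (fun t => ⟨hγ t, hΔ t⟩)
    (fun _ => ⟨?_, single_mem_stdSimplex ℝ j⟩) hj
  rw [single_one]
  exact hasDerivAt_const _ _

end Wfield

/-- Monotonicity of `h_k(x) = ∑_j j·x_j` along trajectories of `W_k` inside the
simplex: `t ↦ h_k (γ t)` is monotone nondecreasing; it is strictly increasing
unless `γ` is constant, in which case `γ` is constantly equal to a vertex. -/
theorem Wfield_hk_monotone (k : ℕ) (γ : ℝ → Fin (k + 1) → ℝ)
    (hγ : ∀ t : ℝ, HasDerivAt γ (Wfield k (γ t)) t)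
    (hΔ : ∀ t : ℝ, γ t ∈ stdSimplex ℝ (Fin (k + 1))) :
    Monotone (fun t : ℝ => ∑ j : Fin (k + 1), ((j : ℕ) : ℝ) * γ t j) ∧
    ((∃ c, ∀ t : ℝ, γ t = c) → ∃ j : Fin (k + 1), ∀ t : ℝ, γ t = Pi.single j 1) ∧
    (¬ (∃ c, ∀ t : ℝ, γ t = c) →
      StrictMono (fun t : ℝ => ∑ j : Fin (k + 1), ((j : ℕ) : ℝ) * γ t j)) := by
  set h' : ℝ → ℝ := fun t => ∑ j : Fin (k + 1), ((j : ℕ) : ℝ) * Wfield k (γ t) j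
  have hderiv : ∀ t, HasDerivAt (fun t => ∑ j : Fin (k + 1), ((j : ℕ) : ℝ) * γ t j) (h' t) t :=
    fun t => (hγ t).sum_mul_apply _
  have hnonneg : ∀ t, 0 ≤ h' t := fun t => Wfield.sum_mul_nonneg (hΔ t).1
  have hvertex : ∀ t, h' t = 0 → ∃ j, γ t = Pi.single j 1 := fun t ht =>
    stdSimplex.exists_eq_single_of_pairwise_mul_eq_zero (hΔ t)
      (Wfield.pairwise_mul_eq_zero_of_sum_mul_eq_zero (hΔ t).1 ht)
  refine ⟨monotone_of_hasDerivAt_nonneg hderiv hnonneg, ?_, ?_⟩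
  · rintro ⟨c, hc⟩
    have hconst : HasDerivAt (fun t => ∑ j : Fin (k + 1), ((j : ℕ) : ℝ) * γ t j) 0 0 := by
      simpa only [hc] using hasDerivAt_const (0 : ℝ) (∑ j : Fin (k + 1), ((j : ℕ) : ℝ) * c j)
    obtain ⟨j, hj⟩ := hvertex 0 ((hderiv 0).unique hconst)
    exact ⟨j, congrFun (Wfield.trajectory_eq_const_of_eq_single hγ hΔ hj)⟩
  · intro hnonconst
    refine strictMono_of_hasDerivAt_pos hderiv fun t => (hnonneg t).lt_of_ne' fun ht => ?_
    obtain ⟨j, hj⟩ := hvertex t ht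
    exact hnonconst ⟨_, congrFun (Wfield.trajectory_eq_const_of_eq_single hγ hΔ hj)⟩
end

section
/- Proposition (convergence of trajectories of W_k to vertices). If γ is a trajectory of W_k with γ(t) ∈ Δ_k for all t ∈ ℝ, then there exist indices j_−, j_+ ∈ {0,…,k} with j_− ≤ j_+ such that γ(t) converges to the vertex e_{j_−} as t → −∞ and γ(t) converges to the vertex e_{j_+} as t → +∞; moreover j_− = j_+ if and only if γ is constant. -/
/-!
In the cumulative coordinates `S_m = x_0 + ⋯ + x_m` the flow decouples: `W_k` only moves mass
between coordinates, the exchanges inside `{0, …, m}` cancel, and on the simplex every `S_m ∘ γ`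
solves the logistic equation `s' = -s (1 - s)` with values in `[0, 1]`. By uniqueness of
solutions such an `s` is `0`, `1`, or `t ↦ σ (c - t)` for the sigmoid `σ`, so it tends to `0` or
`1` at `±∞`. Since `S_m` is monotone in `m` and `S_k = 1`, the `m` with limit `1` at `-∞`
(those with `S_m ≠ 0`) and at `+∞` (those with `S_m = 1`) are final segments starting at some
`j₋ ≤ j₊`, and the cumulative limits are those of the vertices `e_{j₋}` and `e_{j₊}`. If
`j₋ = j₊`, every `S_m` is `0` or `1`, so `γ` is constant.
-/

open Finset Filter

open Topology

theorem exists_forall_iff_le_of_monotone {α : Type*} [LinearOrder α] [WellFoundedLT α]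
    {P : α → Prop} (hP : Monotone P) (hne : ∃ a, P a) : ∃ j, ∀ m, P m ↔ j ≤ m := by
  obtain ⟨j, hj, hmin⟩ := wellFounded_lt.has_min {a | P a} hne
  exact ⟨j, fun m => ⟨fun hm => not_lt.1 (hmin m hm), fun hjm => hP hjm hj⟩⟩

section CumSum

variable {ι R : Type*} [LinearOrder ι] [LocallyFiniteOrderBot ι]

variable (R) in
def cumSum [Semiring R] : (ι → R) →ₗ[R] (ι → R) where
  toFun x m := ∑ i ∈ Iic m, x i
  map_add' x y := by ext m; exact sum_add_distrib
  map_smul' c x := by ext m; exact (mul_sum _ _ _).symm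

theorem cumSum_apply [Semiring R] (x : ι → R) (m : ι) : cumSum R x m = ∑ i ∈ Iic m, x i := rfl

theorem cumSum_single [Semiring R] [DecidableEq ι] (j m : ι) :
    cumSum R (Pi.single j 1) m = if j ≤ m then 1 else 0 := by
  simp only [cumSum_apply, sum_pi_single', mem_Iic]

theorem cumSum_injective [Ring R] [WellFoundedLT ι] :
    Function.Injective (cumSum (ι := ι) R) := by
  refine (injective_iff_map_eq_zero _).2 fun x hx => funext fun m => ?_
  induction m using WellFoundedLT.induction with
  | ind m ih =>
    have hm := congrFun hx m
    rwa [cumSum_apply, Iic_eq_cons_Iio, sum_cons,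
      sum_eq_zero fun i hi => ih i (mem_Iio.1 hi), add_zero] at hm

theorem tendsto_nhds_iff_tendsto_cumSum [Finite ι] {α : Type*} {l : Filter α} {f : α → ι → ℝ}
    {x : ι → ℝ} : Tendsto f l (𝓝 x) ↔ Tendsto (fun a => cumSum ℝ (f a)) l (𝓝 (cumSum ℝ x)) :=
  (LinearMap.isClosedEmbedding_of_injective
    (LinearMap.ker_eq_bot.2 cumSum_injective)).isInducing.tendsto_nhds_iff

theorem monotone_cumSum [Semiring R] [PartialOrder R] [IsOrderedAddMonoid R] {x : ι → R}
    (hx : ∀ i, 0 ≤ x i) : Monotone (cumSum R x) := fun _ _ h =>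
  sum_le_sum_of_subset_of_nonneg (Iic_subset_Iic.2 h) fun i _ _ => hx i

theorem cumSum_add_sum_Ioi [Semiring R] [Fintype ι] [LocallyFiniteOrderTop ι] (x : ι → R)
    (m : ι) : cumSum R x m + ∑ i ∈ Ioi m, x i = ∑ i, x i := by
  rw [cumSum_apply, ← sum_filter_add_sum_filter_not univ (· ≤ m), filter_ge_eq_Iic]
  simp only [not_le, filter_lt_eq_Ioi]

theorem cumSum_mem_Icc [Fintype ι] {x : ι → ℝ} (hx : x ∈ stdSimplex ℝ ι) (m : ι) :
    cumSum ℝ x m ∈ Set.Icc 0 1 :=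
  ⟨sum_nonneg fun i _ => hx.1 i,
    hx.2 ▸ sum_le_sum_of_subset_of_nonneg (subset_univ _) fun i _ _ => hx.1 i⟩

theorem cumSum_top [Semiring R] [Fintype ι] [OrderTop ι] (x : ι → R) :
    cumSum R x ⊤ = ∑ i, x i :=
  sum_congr (by ext; simp) fun _ _ => rfl

end CumSum

def IsLogisticTrajectory (s : ℝ → ℝ) : Prop :=
  ∀ t, HasDerivAt s (-(s t * (1 - s t))) t ∧ s t ∈ Set.Icc 0 1

theorem lipschitzOnWith_neg_mul_one_sub :
    LipschitzOnWith 1 (fun x : ℝ => -(x * (1 - x))) (Set.Icc 0 1) := by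
  refine LipschitzOnWith.of_dist_le_mul fun x hx y hy => ?_
  simp only [Real.dist_eq, NNReal.coe_one, one_mul]
  rw [show -(x * (1 - x)) - -(y * (1 - y)) = (x - y) * (x + y - 1) by ring, abs_mul]
  exact mul_le_of_le_one_right (abs_nonneg _)
    (abs_le.2 ⟨by linarith [hx.1, hy.1], by linarith [hx.2, hy.2]⟩)

theorem isLogisticTrajectory_zero : IsLogisticTrajectory 0 := fun t =>
  ⟨(hasDerivAt_const t (0 : ℝ)).congr_deriv (by simp), by simp⟩

theorem isLogisticTrajectory_one : IsLogisticTrajectory 1 := fun t =>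
  ⟨(hasDerivAt_const t (1 : ℝ)).congr_deriv (by simp), by simp⟩

theorem isLogisticTrajectory_sigmoid_const_sub (c : ℝ) :
    IsLogisticTrajectory fun t => Real.sigmoid (c - t) := fun t =>
  ⟨by simpa [Function.comp_def] using
      (Real.hasDerivAt_sigmoid (c - t)).comp t ((hasDerivAt_id t).const_sub c),
    Real.sigmoid_nonneg _, Real.sigmoid_le_one _⟩

namespace IsLogisticTrajectory

theorem eq_of_apply_eq {s₁ s₂ : ℝ → ℝ} (h₁ : IsLogisticTrajectory s₁)
    (h₂ : IsLogisticTrajectory s₂) {t₀ : ℝ} (h : s₁ t₀ = s₂ t₀) : s₁ = s₂ :=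
  ODE_solution_unique_univ (v := fun _ x => -(x * (1 - x))) (s := fun _ => Set.Icc 0 1)
    (fun _ => lipschitzOnWith_neg_mul_one_sub) h₁ h₂ h

theorem eq_zero_or_eq_one_or_eq_sigmoid {s : ℝ → ℝ} (hs : IsLogisticTrajectory s) :
    s = 0 ∨ s = 1 ∨ ∃ c, s = fun t => Real.sigmoid (c - t) := by
  obtain ⟨h0, h1⟩ := (hs 0).2
  rcases h0.eq_or_lt with h0 | h0
  · exact .inl (hs.eq_of_apply_eq isLogisticTrajectory_zero h0.symm)
  rcases h1.eq_or_lt with h1 | h1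
  · exact .inr (.inl (hs.eq_of_apply_eq isLogisticTrajectory_one h1))
  obtain ⟨c, hc⟩ : s 0 ∈ Set.range Real.sigmoid := Real.range_sigmoid ▸ ⟨h0, h1⟩
  exact .inr (.inr ⟨c,
    hs.eq_of_apply_eq (isLogisticTrajectory_sigmoid_const_sub c) (t₀ := 0) (by simp [hc])⟩)

open Classical in
theorem tendsto_atBot {s : ℝ → ℝ} (hs : IsLogisticTrajectory s) :
    Tendsto s atBot (𝓝 (if s ≠ 0 then 1 else 0)) := by
  rcases hs.eq_zero_or_eq_one_or_eq_sigmoid with rfl | rfl | ⟨c, rfl⟩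
  · rw [if_neg (by simp)]
    exact tendsto_const_nhds
  · rw [if_pos (by simp)]
    exact tendsto_const_nhds
  · have hne : (fun t => Real.sigmoid (c - t)) ≠ 0 := fun h =>
      (Real.sigmoid_pos (c - 0)).ne' (congrFun h 0)
    rw [if_pos hne]
    exact Real.tendsto_sigmoid_atTop.comp
      (tendsto_atTop_add_const_left _ c tendsto_neg_atBot_atTop)

open Classical in
theorem tendsto_atTop {s : ℝ → ℝ} (hs : IsLogisticTrajectory s) :
    Tendsto s atTop (𝓝 (if s = 1 then 1 else 0)) := by
  rcases hs.eq_zero_or_eq_one_or_eq_sigmoid with rfl | rfl | ⟨c, rfl⟩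
  · rw [if_neg (by simp)]
    exact tendsto_const_nhds
  · rw [if_pos (by simp)]
    exact tendsto_const_nhds
  · have hne : (fun t => Real.sigmoid (c - t)) ≠ 1 := fun h =>
      (Real.sigmoid_lt_one (c - 0)).ne (congrFun h 0)
    rw [if_neg hne]
    exact Real.tendsto_sigmoid_atBot.comp
      (tendsto_atBot_add_const_left _ c tendsto_neg_atTop_atBot)

end IsLogisticTrajectory

theorem sum_Iic_Wfield (k : ℕ) (x : Fin (k + 1) → ℝ) (m : Fin (k + 1)) :
    ∑ a ∈ Iic m, Wfield k x a = -((∑ a ∈ Iic m, x a) * ∑ i ∈ Ioi m, x i) := by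
  have split_Ioi : ∀ a ∈ Iic m, ∑ i ∈ Ioi a, x i = ∑ i ∈ Ioc a m, x i + ∑ i ∈ Ioi m, x i := by
    intro a ha
    rw [← sum_filter_add_sum_filter_not (Ioi a) (· ≤ m)]
    congr 2 <;> ext i <;> grind
  have swap : ∑ a ∈ Iic m, ∑ i ∈ Ioc a m, x a * x i = ∑ a ∈ Iic m, ∑ i ∈ Iio a, x a * x i := by
    rw [sum_comm' (t' := Iic m) (s' := Iio)]
    · exact sum_congr rfl fun _ _ => sum_congr rfl fun _ _ => mul_comm _ _
    · intro a i
      simp only [mem_Iic, mem_Ioc, mem_Iio]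
      grind
  calc ∑ a ∈ Iic m, Wfield k x a
      = ∑ a ∈ Iic m, (x a * ∑ i ∈ Iio a, x i - x a * ∑ i ∈ Ioi a, x i) := by
        simp only [Wfield, filter_gt_eq_Iio, filter_lt_eq_Ioi, mul_sub]
    _ = ∑ a ∈ Iic m, (x a * ∑ i ∈ Iio a, x i - x a * ∑ i ∈ Ioc a m, x i)
          - ∑ a ∈ Iic m, x a * ∑ i ∈ Ioi m, x i := by
        rw [← sum_sub_distrib]
        refine sum_congr rfl fun a ha => ?_
        rw [split_Ioi a ha]
        ring
    _ = -((∑ a ∈ Iic m, x a) * ∑ i ∈ Ioi m, x i) := by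
        rw [sum_mul_sum]
        simp only [sum_sub_distrib, mul_sum, swap]
        ring

theorem isLogisticTrajectory_cumSum {k : ℕ} {γ : ℝ → Fin (k + 1) → ℝ}
    (hγ : ∀ t, HasDerivAt γ (Wfield k (γ t)) t) (hΔ : ∀ t, γ t ∈ stdSimplex ℝ (Fin (k + 1)))
    (m : Fin (k + 1)) : IsLogisticTrajectory fun t => cumSum ℝ (γ t) m := fun t => by
  refine ⟨?_, cumSum_mem_Icc (hΔ t) m⟩
  have hsum := HasDerivAt.fun_sum (u := Iic m) fun i _ => hasDerivAt_pi.1 (hγ t) i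
  have hIoi : ∑ i ∈ Ioi m, γ t i = 1 - cumSum ℝ (γ t) m := by
    rw [← (hΔ t).2, ← cumSum_add_sum_Ioi]
    ring
  rwa [sum_Iic_Wfield, hIoi] at hsum

theorem exists_thresholds_ne_zero_eq_one {ι : Type*} [LinearOrder ι] [WellFoundedLT ι]
    {S : ι → ℝ → ℝ} (hS : ∀ m, IsLogisticTrajectory (S m)) (hmono : Monotone S)
    (hone : ∃ m, S m = 1) :
    ∃ jm jp, (∀ m, S m ≠ 0 ↔ jm ≤ m) ∧ (∀ m, S m = 1 ↔ jp ≤ m) := by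
  have hnonneg : ∀ m, 0 ≤ S m := fun m t => (hS m t).2.1
  have hle_one : ∀ m, S m ≤ 1 := fun m t => (hS m t).2.2
  obtain ⟨jm, hjm⟩ := exists_forall_iff_le_of_monotone (P := fun m => S m ≠ 0)
    (fun m _ h hm h0 => hm (le_antisymm (h0 ▸ hmono h) (hnonneg m)))
    (hone.imp fun m (hm : S m = 1) => hm ▸ one_ne_zero)
  obtain ⟨jp, hjp⟩ := exists_forall_iff_le_of_monotone (P := fun m => S m = 1)
    (fun _ m' h hm => le_antisymm (hle_one m') (hm ▸ hmono h)) hone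
  exact ⟨jm, jp, hjm, hjp⟩

/-- Convergence of trajectories of `W_k` inside the simplex to vertices: there are
indices `j₋ ≤ j₊` with `γ(t) → e_{j₋}` as `t → −∞` and `γ(t) → e_{j₊}` as
`t → +∞`, and `j₋ = j₊` iff `γ` is constant. -/
theorem Wfield_trajectory_limits (k : ℕ) (γ : ℝ → Fin (k + 1) → ℝ)
    (hγ : ∀ t : ℝ, HasDerivAt γ (Wfield k (γ t)) t)
    (hΔ : ∀ t : ℝ, γ t ∈ stdSimplex ℝ (Fin (k + 1))) :
    ∃ jm jp : Fin (k + 1), jm ≤ jp ∧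
      Tendsto γ atBot (nhds (Pi.single jm 1)) ∧
      Tendsto γ atTop (nhds (Pi.single jp 1)) ∧
      (jm = jp ↔ ∃ c, ∀ t : ℝ, γ t = c) := by
  set S : Fin (k + 1) → ℝ → ℝ := fun m t => cumSum ℝ (γ t) m
  have hS : ∀ m, IsLogisticTrajectory (S m) := isLogisticTrajectory_cumSum hγ hΔ
  obtain ⟨jm, jp, hjm, hjp⟩ := exists_thresholds_ne_zero_eq_one hS
    (fun _ _ h t => monotone_cumSum (hΔ t).1 h) ⟨⊤, funext fun t => (cumSum_top _).trans (hΔ t).2⟩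
  have hbot : Tendsto γ atBot (𝓝 (Pi.single jm 1)) := by
    rw [tendsto_nhds_iff_tendsto_cumSum, tendsto_pi_nhds]
    exact fun m => by simpa only [cumSum_single, hjm m] using (hS m).tendsto_atBot
  have htop : Tendsto γ atTop (𝓝 (Pi.single jp 1)) := by
    rw [tendsto_nhds_iff_tendsto_cumSum, tendsto_pi_nhds]
    exact fun m => by simpa only [cumSum_single, hjp m] using (hS m).tendsto_atTop
  refine ⟨jm, jp, (hjm jp).1 ((hjp jp).2 le_rfl ▸ one_ne_zero), hbot, htop, ?_, ?_⟩
  · rintro rfl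
    refine ⟨Pi.single jm 1, fun t => cumSum_injective (funext fun m => ?_)⟩
    rw [cumSum_single]
    split_ifs with h
    · exact congrFun ((hjp m).2 h) t
    · exact congrFun (not_not.1 (mt (hjm m).1 h)) t
  · rintro ⟨c, hc⟩
    rw [show γ = fun _ => c from funext hc, tendsto_const_nhds_iff] at hbot htop
    by_contra hne
    simpa [hne] using congrFun (hbot.symm.trans htop) jm
end

section
/- Proposition (stable cells of W_k). For each j ∈ {0,…,k}, the stable cell of W_k at the vertex e_j, namely the set {x ∈ Δ_k : there exists a trajectory γ of W_k with γ(t) ∈ Δ_k for all t, γ(0) = x, and γ(t) → e_j as t → +∞}, is equal to the set {x ∈ Δ_k : x_i = 0 for every i > j, and x_j > 0} (the face of Δ_k spanned by the vertices e_0, …, e_j minus its sub-face spanned by e_0, …, e_{j−1}). -/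
open Finset Filter

/-!
On the simplex the partial sums `P_m = x_0 + ⋯ + x_{m-1}` decouple: each satisfies the logistic
equation `P' = P² - P`, whose solutions in `[0, 1]` decrease and tend to `1` if they start at `1`
and to `0` otherwise. A trajectory tends to `e_j` iff `P_m → 1` exactly for `m > j`, i.e. iff
`P_m(x) = 1` exactly for `m > j`, which says that `x_i = 0` for `i > j` and `x_j > 0`.
Conversely, `P_m(t) = P_m(x) / (P_m(x) + (1 - P_m(x)) e^t)` defines the trajectory through `x`.
-/

noncomputable section

section PrefixSum

variable {M : Type*} {n : ℕ}

def prefixSum [AddCommMonoid M] (x : Fin n → M) (m : ℕ) : M :=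
  ∑ i ∈ univ.filter (fun i : Fin n => (i : ℕ) < m), x i

section AddCommMonoid

variable [AddCommMonoid M]

@[simp]
lemma prefixSum_zero (x : Fin n → M) : prefixSum x 0 = 0 := by
  simp [prefixSum]

lemma prefixSum_succ (x : Fin n → M) (i : Fin n) :
    prefixSum x (i + 1) = prefixSum x i + x i := by
  have h : univ.filter (fun l : Fin n => (l : ℕ) < i + 1)
      = insert i (univ.filter (fun l : Fin n => (l : ℕ) < i)) := by
    ext l
    simp only [mem_filter, mem_univ, true_and, mem_insert, Fin.ext_iff]
    omega
  rw [prefixSum, h, sum_insert (by simp), prefixSum, add_comm]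

lemma prefixSum_of_le (x : Fin n → M) {m : ℕ} (hm : n ≤ m) : prefixSum x m = ∑ i, x i := by
  rw [prefixSum, filter_true_of_mem fun i _ => i.isLt.trans_le hm]

lemma prefixSum_single [DecidableEq (Fin n)] (j : Fin n) (c : M) (m : ℕ) :
    prefixSum (Pi.single j c) m = if (j : ℕ) < m then c else 0 := by
  simp [prefixSum, sum_pi_single']

end AddCommMonoid

lemma prefixSum_succ_sub [AddCommGroup M] (x : Fin n → M) (i : Fin n) :
    prefixSum x (i + 1) - prefixSum x i = x i := by
  rw [prefixSum_succ, add_sub_cancel_left]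

lemma sum_filter_gt_eq_sub_prefixSum [AddCommGroup M] (x : Fin n → M) (m : Fin n) :
    ∑ i ∈ univ.filter (fun i => m < i), x i = ∑ i, x i - prefixSum x (m + 1) := by
  rw [← sum_filter_add_sum_filter_not univ (fun i : Fin n => (i : ℕ) < m + 1) x, prefixSum,
    add_sub_cancel_left]
  exact sum_congr (filter_congr fun i _ => by rw [Fin.lt_def]; omega) fun _ _ => rfl

lemma prefixSum_eq_sub_of_forall_eq_sub [AddCommGroup M] {x : Fin n → M} {g : ℕ → M}
    (hx : ∀ i : Fin n, x i = g (i + 1) - g i) {m : ℕ} (hm : m ≤ n) :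
    prefixSum x m = g m - g 0 := by
  induction m with
  | zero => simp
  | succ m ih =>
    rw [prefixSum_succ x ⟨m, hm⟩, ih (by omega), hx]
    abel

lemma continuous_prefixSum [AddCommMonoid M] [TopologicalSpace M] [ContinuousAdd M] (m : ℕ) :
    Continuous fun x : Fin n → M => prefixSum x m :=
  continuous_finsetSum _ fun i _ => continuous_apply i

lemma hasDerivAt_prefixSum {𝕜 F : Type*} [NontriviallyNormedField 𝕜] [NormedAddCommGroup F]
    [NormedSpace 𝕜 F] {γ : 𝕜 → Fin n → F} {γ' : Fin n → F} {t : 𝕜}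
    (hγ : HasDerivAt γ γ' t) (m : ℕ) :
    HasDerivAt (fun s => prefixSum (γ s) m) (prefixSum γ' m) t :=
  HasDerivAt.fun_sum fun i _ => hasDerivAt_pi.mp hγ i

lemma monotone_prefixSum [AddCommMonoid M] [PartialOrder M] [IsOrderedAddMonoid M]
    {x : Fin n → M} (hx : 0 ≤ x) : Monotone (prefixSum x) :=
  fun _ _ hmn => sum_le_sum_of_subset_of_nonneg
    (monotone_filter_right _ fun _ _ h => lt_of_lt_of_le h hmn) fun i _ _ => hx i

lemma prefixSum_mem_Icc {x : Fin n → ℝ} (hx : x ∈ stdSimplex ℝ (Fin n)) (m : ℕ) :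
    prefixSum x m ∈ Set.Icc 0 1 := by
  refine ⟨by simpa using monotone_prefixSum hx.1 (Nat.zero_le m), ?_⟩
  calc prefixSum x m ≤ prefixSum x (max m n) := monotone_prefixSum hx.1 (le_max_left m n)
    _ = 1 := by rw [prefixSum_of_le x (le_max_right m n), hx.2]

end PrefixSum

section Logistic

open Real

def logisticFlow (a t : ℝ) : ℝ := a / (a + (1 - a) * exp t)

variable {a b : ℝ}

lemma logisticFlow_denom_pos (ha₀ : 0 ≤ a) (ha₁ : a ≤ 1) (t : ℝ) :
    0 < a + (1 - a) * exp t := by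
  rcases ha₀.eq_or_lt with rfl | ha₀
  · simpa using exp_pos t
  · exact add_pos_of_pos_of_nonneg ha₀ (mul_nonneg (by linarith) (exp_pos t).le)

@[simp]
lemma logisticFlow_zero_right (a : ℝ) : logisticFlow a 0 = a := by
  simp [logisticFlow]

@[simp]
lemma logisticFlow_zero_left (t : ℝ) : logisticFlow 0 t = 0 := by
  simp [logisticFlow]

@[simp]
lemma logisticFlow_one_left (t : ℝ) : logisticFlow 1 t = 1 := by
  simp [logisticFlow]

lemma hasDerivAt_logisticFlow (ha₀ : 0 ≤ a) (ha₁ : a ≤ 1) (t : ℝ) :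
    HasDerivAt (logisticFlow a) (logisticFlow a t ^ 2 - logisticFlow a t) t := by
  have hD : HasDerivAt (fun t => a + (1 - a) * exp t) ((1 - a) * exp t) t := by
    simpa using ((hasDerivAt_exp t).const_mul (1 - a)).const_add a
  have hne := (logisticFlow_denom_pos ha₀ ha₁ t).ne'
  refine ((hasDerivAt_const t a).fun_div hD hne).congr_deriv ?_
  simp only [logisticFlow]
  field_simp
  ring

lemma logisticFlow_le_logisticFlow (ha : 0 ≤ a) (hab : a ≤ b) (hb : b ≤ 1) (t : ℝ) :
    logisticFlow a t ≤ logisticFlow b t := by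
  rw [logisticFlow, logisticFlow, div_le_div_iff₀ (logisticFlow_denom_pos ha (hab.trans hb) t)
    (logisticFlow_denom_pos (ha.trans hab) hb t)]
  nlinarith [exp_pos t]

lemma tendsto_logisticFlow_of_lt_one (ha : a < 1) :
    Tendsto (logisticFlow a) atTop (nhds 0) :=
  tendsto_const_nhds.div_atTop <| tendsto_atTop_add_const_left _ a <|
    tendsto_exp_atTop.const_mul_atTop (by linarith)

lemma tendsto_logisticFlow (ha : a ≤ 1) :
    Tendsto (logisticFlow a) atTop (nhds (if a = 1 then 1 else 0)) := by
  split_ifs with h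
  · rw [h]
    exact tendsto_const_nhds.congr fun t => (logisticFlow_one_left t).symm
  · exact tendsto_logisticFlow_of_lt_one (lt_of_le_of_ne ha h)

end Logistic

section LogisticSolution

open Real

variable {S : ℝ → ℝ} (hS : ∀ t, HasDerivAt S (S t ^ 2 - S t) t) (hS₁ : ∀ t, S t ≤ 1)
include hS hS₁

lemma antitone_of_logistic (hS₀ : ∀ t, 0 ≤ S t) : Antitone S :=
  antitone_of_deriv_nonpos (fun t => (hS t).differentiableAt) fun t => by
    rw [(hS t).deriv]
    nlinarith [hS₀ t, hS₁ t]

lemma eq_one_of_logistic (h₀ : S 0 = 1) {t : ℝ} (ht : 0 ≤ t) : S t = 1 := by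
  set g : ℝ → ℝ := fun t => exp (-t) * (1 - S t)
  have hg : ∀ t, HasDerivAt g (-exp (-t) * (1 - S t) ^ 2) t := fun t => by
    refine ((hasDerivAt_neg t).exp.fun_mul ((hS t).const_sub 1)).congr_deriv ?_
    ring
  have hanti : Antitone g := antitone_of_deriv_nonpos (fun t => (hg t).differentiableAt)
    fun t => by
      rw [(hg t).deriv]
      exact mul_nonpos_of_nonpos_of_nonneg (neg_nonpos.2 (exp_pos _).le) (sq_nonneg _)
  have hgt : g t ≤ g 0 := hanti ht
  simp only [g, h₀, sub_self, mul_zero] at hgt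
  nlinarith [exp_pos (-t), hS₁ t]

lemma tendsto_one_iff_of_logistic (hS₀ : ∀ t, 0 ≤ S t) :
    Tendsto S atTop (nhds 1) ↔ S 0 = 1 := by
  refine ⟨fun h => le_antisymm (hS₁ 0) ?_, fun h₀ => ?_⟩
  · exact le_of_tendsto h <|
      eventually_atTop.2 ⟨0, fun t ht => antitone_of_logistic hS hS₁ hS₀ ht⟩
  · exact tendsto_const_nhds.congr' <|
      eventually_atTop.2 ⟨0, fun t ht => (eq_one_of_logistic hS hS₁ h₀ ht).symm⟩

end LogisticSolution

lemma vanish_above_and_pos_iff_prefixSum {n : ℕ} {x : Fin n → ℝ}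
    (hx : x ∈ stdSimplex ℝ (Fin n)) (j : Fin n) :
    ((∀ i, j < i → x i = 0) ∧ 0 < x j) ↔
      ∀ m ≤ n, (prefixSum x m = 1 ↔ (j : ℕ) < m) := by
  have hP := prefixSum_mem_Icc hx
  constructor
  · rintro ⟨hvan, hpos⟩ m hm
    refine ⟨fun h₁ => ?_, fun hjm => ?_⟩
    · by_contra! hmj
      have hle : prefixSum x m ≤ prefixSum x j := monotone_prefixSum hx.1 hmj
      linarith [prefixSum_succ_sub x j, (hP (j + 1)).2]
    · rw [← hx.2, ← sum_filter_add_sum_filter_not univ (fun i : Fin n => (i : ℕ) < m),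
        prefixSum, left_eq_add]
      refine sum_eq_zero fun i hi => hvan i ?_
      rw [mem_filter] at hi
      rw [Fin.lt_def]
      omega
  · intro h
    refine ⟨fun i hji => ?_, ?_⟩
    · rw [← prefixSum_succ_sub x, (h _ i.isLt).2 (by rw [Fin.lt_def] at hji; omega),
        (h _ i.isLt.le).2 hji, sub_self]
    · have hj : prefixSum x j ≠ 1 := fun h₁ => lt_irrefl _ ((h _ j.isLt.le).1 h₁)
      rw [← prefixSum_succ_sub x, (h _ j.isLt).2 (lt_add_one _), sub_pos]
      exact lt_of_le_of_ne (hP j).2 hj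

lemma Wfield_apply_eq_sub {k : ℕ} {y : Fin (k + 1) → ℝ} (hy : ∑ i, y i = 1) (m : Fin (k + 1)) :
    Wfield k y m = (prefixSum y (m + 1) ^ 2 - prefixSum y (m + 1))
      - (prefixSum y m ^ 2 - prefixSum y m) := by
  have hlt : ∑ i ∈ univ.filter (fun i => i < m), y i = prefixSum y m := rfl
  rw [Wfield, hlt, sum_filter_gt_eq_sub_prefixSum, hy, prefixSum_succ]
  ring

lemma prefixSum_Wfield {k : ℕ} {y : Fin (k + 1) → ℝ} (hy : ∑ i, y i = 1) {m : ℕ}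
    (hm : m ≤ k + 1) :
    prefixSum (Wfield k y) m = prefixSum y m ^ 2 - prefixSum y m := by
  simpa using prefixSum_eq_sub_of_forall_eq_sub (g := fun m => prefixSum y m ^ 2 - prefixSum y m)
    (Wfield_apply_eq_sub hy) hm

section Trajectory

variable {k : ℕ} {γ : ℝ → Fin (k + 1) → ℝ}
  (hγ : ∀ t, HasDerivAt γ (Wfield k (γ t)) t)
  (hmem : ∀ t, γ t ∈ stdSimplex ℝ (Fin (k + 1)))

include hγ hmem

lemma hasDerivAt_prefixSum_of_trajectory {m : ℕ} (hm : m ≤ k + 1) (t : ℝ) :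
    HasDerivAt (fun t => prefixSum (γ t) m) (prefixSum (γ t) m ^ 2 - prefixSum (γ t) m) t := by
  simpa only [prefixSum_Wfield (hmem t).2 hm] using hasDerivAt_prefixSum (hγ t) m

lemma prefixSum_eq_one_iff_of_tendsto {j : Fin (k + 1)}
    (hlim : Tendsto γ atTop (nhds (Pi.single j 1))) {m : ℕ} (hm : m ≤ k + 1) :
    prefixSum (γ 0) m = 1 ↔ (j : ℕ) < m := by
  rw [← tendsto_one_iff_of_logistic (hasDerivAt_prefixSum_of_trajectory hγ hmem hm)
    (fun t => (prefixSum_mem_Icc (hmem t) m).2) (fun t => (prefixSum_mem_Icc (hmem t) m).1)]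
  have hS : Tendsto (fun t => prefixSum (γ t) m) atTop
      (nhds (if (j : ℕ) < m then 1 else 0)) := by
    rw [← prefixSum_single]
    exact ((continuous_prefixSum m).tendsto _).comp hlim
  refine ⟨fun h₁ => ?_, fun hjm => by simpa [hjm] using hS⟩
  by_contra hjm
  simpa [hjm] using tendsto_nhds_unique h₁ hS

end Trajectory

section LogisticTrajectory

variable {n : ℕ} {x : Fin n → ℝ}

def logisticTrajectory (x : Fin n → ℝ) (t : ℝ) : Fin n → ℝ :=
  fun i => logisticFlow (prefixSum x (i + 1)) t - logisticFlow (prefixSum x i) t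

lemma prefixSum_logisticTrajectory (x : Fin n → ℝ) (t : ℝ) {m : ℕ} (hm : m ≤ n) :
    prefixSum (logisticTrajectory x t) m = logisticFlow (prefixSum x m) t := by
  simpa using prefixSum_eq_sub_of_forall_eq_sub (x := logisticTrajectory x t)
    (g := fun m => logisticFlow (prefixSum x m) t) (fun i => rfl) hm

@[simp]
lemma logisticTrajectory_zero (x : Fin n → ℝ) : logisticTrajectory x 0 = x :=
  funext fun i => by simp [logisticTrajectory, prefixSum_succ_sub]

lemma logisticTrajectory_mem_stdSimplex (hx : x ∈ stdSimplex ℝ (Fin n)) (t : ℝ) :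
    logisticTrajectory x t ∈ stdSimplex ℝ (Fin n) := by
  have hP := prefixSum_mem_Icc hx
  refine ⟨fun i => sub_nonneg.2 (logisticFlow_le_logisticFlow (hP i).1
    (monotone_prefixSum hx.1 (Nat.le_succ i)) (hP _).2 t), ?_⟩
  rw [← prefixSum_of_le _ le_rfl, prefixSum_logisticTrajectory _ _ le_rfl,
    prefixSum_of_le _ le_rfl, hx.2, logisticFlow_one_left]

lemma tendsto_logisticTrajectory (hx : x ∈ stdSimplex ℝ (Fin n)) {j : Fin n}
    (h : ∀ m ≤ n, (prefixSum x m = 1 ↔ (j : ℕ) < m)) :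
    Tendsto (logisticTrajectory x) atTop (nhds (Pi.single j 1)) := by
  have hlim : ∀ m ≤ n, Tendsto (logisticFlow (prefixSum x m)) atTop
      (nhds (prefixSum (Pi.single j (1 : ℝ)) m)) := fun m hm => by
    simpa only [prefixSum_single, h m hm] using tendsto_logisticFlow (prefixSum_mem_Icc hx m).2
  refine tendsto_pi_nhds.2 fun i => ?_
  rw [← prefixSum_succ_sub (Pi.single j 1)]
  exact (hlim _ i.isLt).sub (hlim _ i.isLt.le)

end LogisticTrajectory

lemma hasDerivAt_logisticTrajectory {k : ℕ} {x : Fin (k + 1) → ℝ}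
    (hx : x ∈ stdSimplex ℝ (Fin (k + 1))) (t : ℝ) :
    HasDerivAt (logisticTrajectory x) (Wfield k (logisticTrajectory x t)) t := by
  have hP := prefixSum_mem_Icc hx
  refine hasDerivAt_pi.2 fun i => ?_
  rw [Wfield_apply_eq_sub (logisticTrajectory_mem_stdSimplex hx t).2,
    prefixSum_logisticTrajectory _ _ i.isLt, prefixSum_logisticTrajectory _ _ i.isLt.le]
  exact (hasDerivAt_logisticFlow (hP _).1 (hP _).2 t).sub
    (hasDerivAt_logisticFlow (hP _).1 (hP _).2 t)

end

/-- Stable cells of `W_k`: the set of points of `Δ_k` lying on a trajectory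
converging to the vertex `e_j` as `t → +∞` is exactly
`{x ∈ Δ_k : x_i = 0 for i > j, and x_j > 0}`. -/
theorem Wfield_stable_cell (k : ℕ) (j : Fin (k + 1)) :
    {x : Fin (k + 1) → ℝ | x ∈ stdSimplex ℝ (Fin (k + 1)) ∧
      ∃ γ : ℝ → Fin (k + 1) → ℝ,
        (∀ t : ℝ, HasDerivAt γ (Wfield k (γ t)) t) ∧
        (∀ t : ℝ, γ t ∈ stdSimplex ℝ (Fin (k + 1))) ∧
        γ 0 = x ∧
        Tendsto γ atTop (nhds (Pi.single j 1))}
    = {x : Fin (k + 1) → ℝ | x ∈ stdSimplex ℝ (Fin (k + 1)) ∧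
        (∀ i : Fin (k + 1), j < i → x i = 0) ∧ 0 < x j} := by
  ext x
  constructor
  · rintro ⟨hx, γ, hγ, hmem, rfl, hlim⟩
    exact ⟨hx, (vanish_above_and_pos_iff_prefixSum hx j).2 fun m hm =>
      prefixSum_eq_one_iff_of_tendsto hγ hmem hlim hm⟩
  · rintro ⟨hx, hcell⟩
    exact ⟨hx, logisticTrajectory x, hasDerivAt_logisticTrajectory hx,
      logisticTrajectory_mem_stdSimplex hx, logisticTrajectory_zero x,
      tendsto_logisticTrajectory hx ((vanish_above_and_pos_iff_prefixSum hx j).1 hcell)⟩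
end

section
/- Theorem (flatness of the simplicial superconnection is equivalent to the quadratic relations). Fix n ≥ 0, a commutative ring R, an R-module V, and a function a assigning to every subset T ⊆ {0,…,n} an R-linear endomorphism a(T) of V with a(∅) = 0. Let C be the R-module of functions s from subsets of {0,…,n} to V with s(∅) = 0, and define the R-linear map δ : C → C by: for a nonempty subset T with elements t_0 < t_1 < ⋯ < t_k, (δ s)(T) = Σ_{j=0}^{k} (−1)^j · s(T \ {t_j}) + Σ_{j=0}^{k} (−1)^{k(j−1)} · a({t_0,…,t_j}) (s({t_j,…,t_k})), and (δ s)(∅) = 0. Then δ ∘ δ = 0 if and only if a satisfies the flatness relations: for every nonempty subset T with elements t_0 < ⋯ < t_k, 0 = Σ_{j=0}^{k} (−1)^j · a(T \ {t_j}) + Σ_{j=0}^{k} (−1)^{k(j−1)} · a({t_0,…,t_j}) ∘ a({t_j,…,t_k}). -/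
open Finset

namespace SSC

variable {N : ℕ}

/-- The image of the integer interval `[p,q]` under `E`. -/
def seg (E : ℕ → Fin (N + 1)) (p q : ℕ) : Finset (Fin (N + 1)) := (Finset.Icc p q).image E

/-- `E` with the value at position `j` skipped. -/
def punc (E : ℕ → Fin (N + 1)) (j : ℕ) : ℕ → Fin (N + 1) := fun m => if m < j then E m else E (m + 1)

lemma seg_def (E : ℕ → Fin (N + 1)) (p q : ℕ) : seg E p q = (Finset.Icc p q).image E := rfl

lemma seg_empty {E : ℕ → Fin (N + 1)} {p q : ℕ} (h : q < p) : seg E p q = ∅ := by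
  rw [seg_def, Finset.Icc_eq_empty (by omega), Finset.image_empty]

lemma seg_congr {E F : ℕ → Fin (N + 1)} {p q : ℕ} (h : ∀ x, p ≤ x → x ≤ q → E x = F x) :
    seg E p q = seg F p q := by
  unfold seg
  ext y
  simp only [Finset.mem_image, Finset.mem_Icc]
  constructor
  · rintro ⟨m, ⟨h1, h2⟩, rfl⟩; exact ⟨m, ⟨h1, h2⟩, (h m h1 h2).symm⟩
  · rintro ⟨m, ⟨h1, h2⟩, rfl⟩; exact ⟨m, ⟨h1, h2⟩, h m h1 h2⟩

lemma mem_seg {E : ℕ → Fin (N + 1)} {p q : ℕ} {x : Fin (N + 1)} :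
    x ∈ seg E p q ↔ ∃ m, p ≤ m ∧ m ≤ q ∧ E m = x := by
  simp [seg, Finset.mem_image, Finset.mem_Icc, and_assoc]

section seglemmas

variable {E : ℕ → Fin (N + 1)} {k : ℕ} (hE : ∀ ⦃i j : ℕ⦄, i < j → j ≤ k → E i < E j)

include hE

lemma E_inj {i j : ℕ} (hi : i ≤ k) (hj : j ≤ k) (h : E i = E j) : i = j := by
  rcases lt_trichotomy i j with hlt | he | hlt
  · exact absurd h (ne_of_lt (hE hlt hj))
  · exact he
  · exact absurd h.symm (ne_of_lt (hE hlt hi))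

lemma seg_card {p q : ℕ} (hpq : p ≤ q) (hq : q ≤ k) : (seg E p q).card = q - p + 1 := by
  rw [seg, Finset.card_image_of_injOn, Nat.card_Icc]
  · omega
  · intro x hx y hy hxy
    rw [Finset.mem_coe, Finset.mem_Icc] at hx hy
    exact E_inj hE (le_trans hx.2 hq) (le_trans hy.2 hq) hxy

lemma seg_emb {p q : ℕ} (hpq : p ≤ q) (hq : q ≤ k)
    (h' : (seg E p q).card = (q - p) + 1) (i : Fin (q - p + 1)) :
    (seg E p q).orderEmbOfFin h' i = E (p + i) := by
  have key := Finset.orderEmbOfFin_unique h'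
    (f := fun i : Fin (q - p + 1) => E (p + (i : ℕ))) ?_ ?_
  · exact (congrFun key i).symm
  · intro x
    exact mem_seg.2 ⟨p + x, Nat.le_add_right _ _, by omega, rfl⟩
  · intro x y hxy
    exact hE (by omega) (by omega)

lemma seg_erase_bot {p q : ℕ} (hpq : p ≤ q) (hq : q ≤ k) :
    (seg E p q).erase (E p) = seg E (p + 1) q := by
  ext x
  simp only [Finset.mem_erase, mem_seg]
  constructor
  · rintro ⟨hne, m, h1, h2, rfl⟩
    refine ⟨m, ?_, h2, rfl⟩
    rcases Nat.eq_or_lt_of_le h1 with rfl | h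
    · exact absurd rfl hne
    · omega
  · rintro ⟨m, h1, h2, rfl⟩
    exact ⟨fun h => by have := E_inj hE (le_trans h2 hq) (by omega) h; omega,
      m, by omega, h2, rfl⟩

lemma seg_erase_top {p q : ℕ} (hpq : p < q) (hq : q ≤ k) :
    (seg E p q).erase (E q) = seg E p (q - 1) := by
  ext x
  simp only [Finset.mem_erase, mem_seg]
  constructor
  · rintro ⟨hne, m, h1, h2, rfl⟩
    refine ⟨m, h1, ?_, rfl⟩
    rcases Nat.eq_or_lt_of_le h2 with rfl | h
    · exact absurd rfl hne
    · omega
  · rintro ⟨m, h1, h2, rfl⟩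
    exact ⟨fun h => by have := E_inj hE (by omega) hq h; omega, m, h1, by omega, rfl⟩

lemma seg_erase_card {p r q : ℕ} (h1 : p ≤ r) (h2 : r ≤ q) (hq : q ≤ k) :
    ((seg E p q).erase (E r)).card = q - p := by
  rw [Finset.card_erase_of_mem (mem_seg.2 ⟨r, h1, h2, rfl⟩), seg_card hE (le_trans h1 h2) hq]
  omega

lemma punc_emb {k' j : ℕ} (hk : k = k' + 1) (hj : j ≤ k)
    (h' : ((seg E 0 k).erase (E j)).card = k' + 1) (i : Fin (k' + 1)) :
    ((seg E 0 k).erase (E j)).orderEmbOfFin h' i = punc E j i := by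
  have key := Finset.orderEmbOfFin_unique h'
    (f := fun i : Fin (k' + 1) => punc E j (i : ℕ)) ?_ ?_
  · exact (congrFun key i).symm
  · intro x
    rw [Finset.mem_erase]
    simp only [punc]
    split_ifs with hx
    · exact ⟨ne_of_lt (hE hx hj), mem_seg.2 ⟨x, Nat.zero_le _, by omega, rfl⟩⟩
    · exact ⟨(ne_of_lt (hE (by omega) (by omega))).symm,
        mem_seg.2 ⟨(x : ℕ) + 1, Nat.zero_le _, by omega, rfl⟩⟩
  · intro x y hxy
    simp only [punc]
    split_ifs with h1 h2 h2
    · exact hE hxy (by omega)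
    · exact hE (by omega) (by omega)
    · omega
    · exact hE (by omega) (by omega)

lemma punc_image_Icc_left {k' j i : ℕ} (hk : k = k' + 1) (hj : j ≤ k) (hi : i ≤ k') :
    seg (punc E j) 0 i =
      if i < j then seg E 0 i else (seg E 0 (i + 1)).erase (E j) := by
  rw [seg_def]
  split_ifs with hij
  · rw [seg]
    apply Finset.image_congr
    intro x hx
    rw [Finset.mem_coe, Finset.mem_Icc] at hx
    have hx' : x < j := by omega
    simp only [punc, if_pos hx']
  · ext x
    simp only [Finset.mem_image, Finset.mem_erase, mem_seg, Finset.mem_Icc]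
    constructor
    · rintro ⟨m, ⟨-, hm⟩, rfl⟩
      simp only [punc]
      split_ifs with h1
      · exact ⟨ne_of_lt (hE h1 hj), m, Nat.zero_le _, by omega, rfl⟩
      · exact ⟨(ne_of_lt (hE (by omega) (by omega))).symm, m + 1, Nat.zero_le _, by omega, rfl⟩
    · rintro ⟨hne, m, -, hm, rfl⟩
      have hmj : m ≠ j := fun h => hne (by rw [h])
      rcases lt_or_gt_of_ne hmj with h1 | h1
      · exact ⟨m, ⟨Nat.zero_le _, by omega⟩, by simp [punc, h1]⟩
      · exact ⟨m - 1, ⟨Nat.zero_le _, by omega⟩,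
          by simp only [punc, if_neg (by omega : ¬ (m - 1 < j))]; congr 1; omega⟩

lemma punc_image_Icc_right {k' j i : ℕ} (hk : k = k' + 1) (hj : j ≤ k) (hi : i ≤ k') :
    seg (punc E j) i k' =
      if i < j then (seg E i k).erase (E j) else seg E (i + 1) k := by
  rw [seg_def]
  split_ifs with hij
  · ext x
    simp only [Finset.mem_image, Finset.mem_erase, mem_seg, Finset.mem_Icc]
    constructor
    · rintro ⟨m, ⟨hm1, hm2⟩, rfl⟩
      simp only [punc]
      split_ifs with h1
      · exact ⟨ne_of_lt (hE h1 hj), m, hm1, by omega, rfl⟩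
      · exact ⟨(ne_of_lt (hE (by omega) (by omega))).symm, m + 1, by omega, by omega, rfl⟩
    · rintro ⟨hne, m, hm1, hm2, rfl⟩
      have hmj : m ≠ j := fun h => hne (by rw [h])
      rcases lt_or_gt_of_ne hmj with h1 | h1
      · exact ⟨m, ⟨hm1, by omega⟩, by simp [punc, h1]⟩
      · exact ⟨m - 1, ⟨by omega, by omega⟩,
          by simp only [punc, if_neg (by omega : ¬ (m - 1 < j))]; congr 1; omega⟩
  · rw [seg]
    have : Finset.Icc (i + 1) k = (Finset.Icc i k').image (· + 1) := by
      ext x; simp only [Finset.mem_Icc, Finset.mem_image]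
      constructor
      · rintro ⟨h1, h2⟩; exact ⟨x - 1, ⟨by omega, by omega⟩, by omega⟩
      · rintro ⟨m, ⟨h1, h2⟩, rfl⟩; omega
    rw [this, Finset.image_image]
    apply Finset.image_congr
    intro x hx
    rw [Finset.mem_coe, Finset.mem_Icc] at hx
    have hx' : ¬ (x < j) := by omega
    simp only [Function.comp, punc, if_neg hx']

omit hE in
lemma seg_shift_image {p q j : ℕ} :
    seg (fun m => E (j + m)) p q = seg E (j + p) (j + q) := by
  rw [seg_def, seg_def]
  have : Finset.Icc (j + p) (j + q) = (Finset.Icc p q).image (j + ·) := by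
    ext x; simp only [Finset.mem_Icc, Finset.mem_image]
    constructor
    · rintro ⟨h1, h2⟩; exact ⟨x - j, ⟨by omega, by omega⟩, by omega⟩
    · rintro ⟨m, ⟨h1, h2⟩, rfl⟩; omega
  rw [this, Finset.image_image]
  rfl

end seglemmas

lemma erase_erase_comm {β : Type*} [DecidableEq β] (s : Finset β) (x y : β) :
    (s.erase x).erase y = (s.erase y).erase x := by
  ext z
  simp only [Finset.mem_erase]
  tauto

end SSC


namespace SSC

section triangle
variable {M : Type*} [AddCommMonoid M]

lemma tri1 (N : ℕ) (f : ℕ → ℕ → M) :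
    ∑ q ∈ Finset.range N, ∑ p ∈ Finset.range q, f p q
      = ∑ p ∈ Finset.range N, ∑ q ∈ Finset.Ico (p + 1) N, f p q := by
  induction N with
  | zero => simp
  | succ N ih =>
    calc ∑ q ∈ Finset.range (N + 1), ∑ p ∈ Finset.range q, f p q
        = (∑ q ∈ Finset.range N, ∑ p ∈ Finset.range q, f p q)
            + ∑ p ∈ Finset.range N, f p N := Finset.sum_range_succ _ _
      _ = (∑ p ∈ Finset.range N, ∑ q ∈ Finset.Ico (p + 1) N, f p q)
            + ∑ p ∈ Finset.range N, f p N := by rw [ih]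
      _ = ∑ p ∈ Finset.range N, ((∑ q ∈ Finset.Ico (p + 1) N, f p q) + f p N) :=
            Finset.sum_add_distrib.symm
      _ = ∑ p ∈ Finset.range N, ∑ q ∈ Finset.Ico (p + 1) (N + 1), f p q := by
            refine Finset.sum_congr rfl fun p hp => ?_
            rw [Finset.mem_range] at hp
            rw [Finset.sum_Ico_succ_top (by omega)]
      _ = ∑ p ∈ Finset.range (N + 1), ∑ q ∈ Finset.Ico (p + 1) (N + 1), f p q := by
            rw [Finset.sum_range_succ, Finset.Ico_self, Finset.sum_empty, add_zero]

lemma tri2 (N : ℕ) (f : ℕ → ℕ → M) :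
    ∑ m ∈ Finset.range N, ∑ j ∈ Finset.range (m + 1), f j m
      = ∑ j ∈ Finset.range N, ∑ m ∈ Finset.Ico j N, f j m := by
  calc ∑ m ∈ Finset.range N, ∑ j ∈ Finset.range (m + 1), f j m
      = ∑ m ∈ Finset.range N, ((∑ j ∈ Finset.range m, f j m) + f m m) := by
        refine Finset.sum_congr rfl fun m _ => Finset.sum_range_succ _ _
    _ = (∑ m ∈ Finset.range N, ∑ j ∈ Finset.range m, f j m)
          + ∑ m ∈ Finset.range N, f m m := Finset.sum_add_distrib
    _ = (∑ j ∈ Finset.range N, ∑ m ∈ Finset.Ico (j + 1) N, f j m)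
          + ∑ j ∈ Finset.range N, f j j := by rw [tri1]
    _ = ∑ j ∈ Finset.range N, (f j j + ∑ m ∈ Finset.Ico (j + 1) N, f j m) := by
        rw [← Finset.sum_add_distrib]
        exact Finset.sum_congr rfl fun j _ => add_comm _ _
    _ = ∑ j ∈ Finset.range N, ∑ m ∈ Finset.Ico j N, f j m := by
        refine Finset.sum_congr rfl fun j hj => ?_
        rw [Finset.mem_range] at hj
        rw [Finset.sum_eq_sum_Ico_succ_bot hj]

lemma sum_Ico_shift (f : ℕ → M) (a b : ℕ) :
    ∑ i ∈ Finset.Ico a b, f (i + 1) = ∑ i ∈ Finset.Ico (a + 1) (b + 1), f i := by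
  rw [Finset.sum_Ico_eq_sum_range, Finset.sum_Ico_eq_sum_range]
  simp only [Nat.succ_sub_succ_eq_sub]
  exact Finset.sum_congr rfl fun i _ => by congr 1; omega

end triangle

section signs

variable {R : Type*} [Monoid R] [HasDistribNeg R]

lemma neg_one_pow_congr {x y : ℕ} (h : x % 2 = y % 2) : ((-1 : R)) ^ x = (-1) ^ y := by
  rw [← Nat.div_add_mod x 2, ← Nat.div_add_mod y 2, pow_add, pow_add, pow_mul, pow_mul,
    neg_one_sq, one_pow, one_pow, h]

lemma parity_cast {x y : ℕ} (h : (x : ZMod 2) = (y : ZMod 2)) : ((-1 : R)) ^ x = (-1) ^ y :=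
  neg_one_pow_congr ((ZMod.natCast_eq_natCast_iff' x y 2).1 h)

end signs

lemma smul_smul_pow {R : Type*} [CommRing R] {V : Type*} [AddCommGroup V] [Module R V]
    (x y : ℕ) (v : V) : ((-1 : R)) ^ x • ((-1 : R)) ^ y • v = ((-1 : R)) ^ (x + y) • v := by
  rw [smul_smul, ← pow_add]

lemma smul_cancel {R : Type*} [CommRing R] {V : Type*} [AddCommGroup V] [Module R V]
    {x y : ℕ} (h : x % 2 = (y + 1) % 2) (v : V) :
    ((-1 : R)) ^ x • v + ((-1 : R)) ^ y • v = 0 := by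
  rw [neg_one_pow_congr h, pow_succ, mul_neg_one, neg_smul, neg_add_cancel]

end SSC
namespace SSC

variable {n : ℕ} {R : Type*} [CommRing R] {V : Type*} [AddCommGroup V] [Module R V]

/-- Nat-indexed version of `orderEmbOfFin`, clamped at `k`. -/
def embN (T : Finset (Fin (n + 1))) {k : ℕ} (h : T.card = k + 1) : ℕ → Fin (n + 1) :=
  fun m => T.orderEmbOfFin h ⟨min m k, by omega⟩

lemma embN_strict (T : Finset (Fin (n + 1))) {k : ℕ} (h : T.card = k + 1) :
    ∀ ⦃i j : ℕ⦄, i < j → j ≤ k → embN T h i < embN T h j := by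
  intro i j hij hj
  apply (T.orderEmbOfFin h).strictMono
  simp only [Fin.mk_lt_mk]
  omega

lemma embN_eq (T : Finset (Fin (n + 1))) {k : ℕ} (h : T.card = k + 1) (j : Fin (k + 1)) :
    T.orderEmbOfFin h j = embN T h (j : ℕ) := by
  unfold embN
  congr 1
  apply Fin.ext
  simp only
  omega

lemma T_eq_seg (T : Finset (Fin (n + 1))) {k : ℕ} (h : T.card = k + 1) :
    T = seg (embN T h) 0 k := by
  have hE := embN_strict T h
  refine (Finset.eq_of_subset_of_card_le (fun x hx => ?_) ?_).symm
  · rw [mem_seg] at hx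
    obtain ⟨m, -, hm, rfl⟩ := hx
    exact Finset.orderEmbOfFin_mem T h _
  · rw [h, seg_card hE (Nat.zero_le _) le_rfl]
    omega

/-- The image of `Iic j` under `orderEmbOfFin` is a segment. -/
lemma image_Iic_eq_seg (T : Finset (Fin (n + 1))) {k : ℕ} (h : T.card = k + 1)
    (j : Fin (k + 1)) :
    (Finset.Iic j).image (fun i => T.orderEmbOfFin h i) = seg (embN T h) 0 (j : ℕ) := by
  ext x
  simp only [Finset.mem_image, Finset.mem_Iic, mem_seg]
  constructor
  · rintro ⟨i, hi, rfl⟩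
    exact ⟨(i : ℕ), Nat.zero_le _, hi, (embN_eq T h i).symm⟩
  · rintro ⟨m, -, hm, rfl⟩
    refine ⟨⟨m, by omega⟩, ?_, ?_⟩
    · rw [Fin.le_def]; exact hm
    · exact embN_eq T h _

lemma image_Ici_eq_seg (T : Finset (Fin (n + 1))) {k : ℕ} (h : T.card = k + 1)
    (j : Fin (k + 1)) :
    (Finset.Ici j).image (fun i => T.orderEmbOfFin h i) = seg (embN T h) (j : ℕ) k := by
  ext x
  simp only [Finset.mem_image, Finset.mem_Ici, mem_seg]
  constructor
  · rintro ⟨i, hi, rfl⟩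
    exact ⟨(i : ℕ), hi, by omega, (embN_eq T h i).symm⟩
  · rintro ⟨m, hm, hm2, rfl⟩
    refine ⟨⟨m, by omega⟩, ?_, ?_⟩
    · rw [Fin.le_def]; exact hm
    · exact embN_eq T h _

section withDelta

variable (a : Finset (Fin (n + 1)) → Module.End R V)
  (δ : (Finset (Fin (n + 1)) → V) → (Finset (Fin (n + 1)) → V))
  (hδ0 : ∀ s : Finset (Fin (n + 1)) → V, δ s ∅ = 0)
  (hδ : ∀ (s : Finset (Fin (n + 1)) → V) (T : Finset (Fin (n + 1))) (k : ℕ)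
      (h : T.card = k + 1),
    δ s T =
      (∑ j : Fin (k + 1), ((-1 : R) ^ (j : ℕ)) •
          s (T.erase (T.orderEmbOfFin h j)))
      + ∑ j : Fin (k + 1), ((-1 : R) ^ (k * ((j : ℕ) + 1))) •
          (a ((Finset.Iic j).image (fun i => T.orderEmbOfFin h i))
            (s ((Finset.Ici j).image (fun i => T.orderEmbOfFin h i)))))

include hδ

/-- Nat-indexed form of the coboundary formula. -/
lemma deltaN
    (s : Finset (Fin (n + 1)) → V) (T : Finset (Fin (n + 1))) (k : ℕ) (h : T.card = k + 1)
    (E : ℕ → Fin (n + 1)) (hE : ∀ j : Fin (k + 1), E (j : ℕ) = T.orderEmbOfFin h j) :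
    δ s T =
      (∑ j ∈ Finset.range (k + 1), ((-1 : R) ^ j) • s (T.erase (E j)))
      + ∑ j ∈ Finset.range (k + 1), ((-1 : R) ^ (k * (j + 1))) •
          a (seg E 0 j) (s (seg E j k)) := by
  have hE' : ∀ j : Fin (k + 1), E (j : ℕ) = embN T h (j : ℕ) := by
    intro j; rw [hE j, embN_eq]
  have hseg1 : ∀ j : Fin (k + 1), seg E 0 (j : ℕ) = seg (embN T h) 0 (j : ℕ) := by
    intro j
    refine seg_congr fun x h1 h2 => ?_
    have hx : x ≤ k := by omega
    have : x = ((⟨x, by omega⟩ : Fin (k + 1)) : ℕ) := rfl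
    rw [this, hE' ⟨x, by omega⟩]
  have hseg2 : ∀ j : Fin (k + 1), seg E (j : ℕ) k = seg (embN T h) (j : ℕ) k := by
    intro j
    refine seg_congr fun x h1 h2 => ?_
    have : x = ((⟨x, by omega⟩ : Fin (k + 1)) : ℕ) := rfl
    rw [this, hE' ⟨x, by omega⟩]
  rw [hδ s T k h]
  congr 1
  · rw [← Fin.sum_univ_eq_sum_range
      (fun j => ((-1 : R) ^ j) • s (T.erase (E j))) (k + 1)]
    exact Finset.sum_congr rfl fun j _ => by rw [hE j]
  · rw [← Fin.sum_univ_eq_sum_range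
      (fun j => ((-1 : R) ^ (k * (j + 1))) • a (seg E 0 j) (s (seg E j k))) (k + 1)]
    refine Finset.sum_congr rfl fun j _ => ?_
    rw [image_Iic_eq_seg, image_Ici_eq_seg, hseg1 j, hseg2 j]

include hδ0 in
/-- Expansion of `δ s` on a punctured set. -/
lemma expandA (s : Finset (Fin (n + 1)) → V) (T : Finset (Fin (n + 1))) (k : ℕ)
    (h : T.card = k + 1) (E : ℕ → Fin (n + 1))
    (hE : ∀ ⦃i j : ℕ⦄, i < j → j ≤ k → E i < E j) (hT : T = seg E 0 k)
    (j : ℕ) (hj : j ≤ k) :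
    δ s (T.erase (E j)) =
      (∑ i ∈ Finset.range k, ((-1 : R) ^ i) • s ((T.erase (E j)).erase (punc E j i)))
      + ∑ i ∈ Finset.range k, ((-1 : R) ^ ((k - 1) * (i + 1))) •
          a (seg (punc E j) 0 i) (s (seg (punc E j) i (k - 1))) := by
  subst hT
  rcases k with _ | k'
  · interval_cases j
    have hT0 : (seg E 0 0).erase (E 0) = ∅ := by
      rw [seg_def, Finset.Icc_self, Finset.image_singleton, Finset.erase_singleton]
    rw [hT0, hδ0 s]
    simp
  · have hcard : ((seg E 0 (k' + 1)).erase (E j)).card = k' + 1 := by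
      rw [seg_erase_card hE (Nat.zero_le _) hj le_rfl]
      omega
    simp only [Nat.add_sub_cancel]
    exact deltaN a δ hδ s _ k' hcard (punc E j) fun i => (punc_emb hE rfl hj hcard i).symm

/-- Expansion of `δ s` on a terminal segment. -/
lemma expandB (s : Finset (Fin (n + 1)) → V) (k : ℕ) (E : ℕ → Fin (n + 1))
    (hE : ∀ ⦃i j : ℕ⦄, i < j → j ≤ k → E i < E j)
    (j : ℕ) (hj : j ≤ k) :
    δ s (seg E j k) =
      (∑ i ∈ Finset.range (k - j + 1), ((-1 : R) ^ i) • s ((seg E j k).erase (E (j + i))))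
      + ∑ i ∈ Finset.range (k - j + 1), ((-1 : R) ^ ((k - j) * (i + 1))) •
          a (seg E j (j + i)) (s (seg E (j + i) k)) := by
  have hcard : (seg E j k).card = (k - j) + 1 := seg_card hE hj le_rfl
  have base := deltaN a δ hδ s (seg E j k) (k - j) hcard (fun m => E (j + m))
    (fun i => (seg_emb hE hj le_rfl hcard i).symm)
  rw [base]
  congr 1
  refine Finset.sum_congr rfl fun i hi => ?_
  rw [Finset.mem_range] at hi
  rw [seg_shift_image, seg_shift_image]
  have h1 : j + 0 = j := rfl
  have h2 : j + (k - j) = k := by omega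
  rw [h1, h2]

end withDelta



lemma par_mod {x y : ℕ} (h : (x : ZMod 2) = (y : ZMod 2)) : x % 2 = y % 2 :=
  (ZMod.natCast_eq_natCast_iff' x y 2).1 h

lemma parityC2 {j m k : ℕ} (hjm : j ≤ m) (hmk : m ≤ k) :
    (k * (j + 1) + (k - j) * (m - j + 1)) % 2 = (m * (k + 1) + m * (j + 1)) % 2 := by
  obtain ⟨e, rfl⟩ : ∃ e, m = j + e := ⟨m - j, by omega⟩
  obtain ⟨d, rfl⟩ : ∃ d, k = j + e + d := ⟨k - (j + e), by omega⟩
  have h1 : j + e + d - j = e + d := by omega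
  have h2 : j + e - j = e := by omega
  rw [h1, h2]
  apply par_mod
  push_cast
  generalize (j : ZMod 2) = J
  generalize (e : ZMod 2) = Eb
  generalize (d : ZMod 2) = D
  revert J Eb D
  decide

lemma parityC5 {p q k : ℕ} (hpq : p < q) (hq : q ≤ k) :
    (q + (k - 1) * (p + 1)) % 2 = (k * (p + 1) + (q - p) + 1) % 2 := by
  obtain ⟨u, rfl⟩ : ∃ u, q = p + 1 + u := ⟨q - (p + 1), by omega⟩
  obtain ⟨v, rfl⟩ : ∃ v, k = p + 1 + u + v := ⟨k - (p + 1 + u), by omega⟩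
  have h1 : p + 1 + u + v - 1 = p + u + v := by omega
  have h2 : p + 1 + u - p = 1 + u := by omega
  rw [h1, h2]
  apply par_mod
  push_cast
  generalize (p : ZMod 2) = P
  generalize (u : ZMod 2) = U
  generalize (v : ZMod 2) = Vv
  revert P U Vv
  decide

lemma parityC6off {p q k : ℕ} (hpq : p < q) (hq : q ≤ k) :
    (p + (k - 1) * q) % 2 = (q * (k + 1) + p) % 2 := by
  obtain ⟨u, rfl⟩ : ∃ u, q = p + 1 + u := ⟨q - (p + 1), by omega⟩
  obtain ⟨v, rfl⟩ : ∃ v, k = p + 1 + u + v := ⟨k - (p + 1 + u), by omega⟩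
  have h1 : p + 1 + u + v - 1 = p + u + v := by omega
  rw [h1]
  apply par_mod
  push_cast
  generalize (p : ZMod 2) = P
  generalize (u : ZMod 2) = U
  generalize (v : ZMod 2) = Vv
  revert P U Vv
  decide

lemma parityC6diag (j k : ℕ) :
    (k * (j + 1)) % 2 = ((j + 1) * (k + 1) + (j + 1)) % 2 := by
  apply par_mod
  push_cast
  generalize (j : ZMod 2) = J
  generalize (k : ZMod 2) = K
  revert J K
  decide

section master

variable (a : Finset (Fin (n + 1)) → Module.End R V)
  (δ : (Finset (Fin (n + 1)) → V) → (Finset (Fin (n + 1)) → V))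
  (hδ0 : ∀ s : Finset (Fin (n + 1)) → V, δ s ∅ = 0)
  (hδ : ∀ (s : Finset (Fin (n + 1)) → V) (T : Finset (Fin (n + 1))) (k : ℕ)
      (h : T.card = k + 1),
    δ s T =
      (∑ j : Fin (k + 1), ((-1 : R) ^ (j : ℕ)) •
          s (T.erase (T.orderEmbOfFin h j)))
      + ∑ j : Fin (k + 1), ((-1 : R) ^ (k * ((j : ℕ) + 1))) •
          (a ((Finset.Iic j).image (fun i => T.orderEmbOfFin h i))
            (s ((Finset.Ici j).image (fun i => T.orderEmbOfFin h i)))))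

include hδ0 hδ

lemma master (ha : a ∅ = 0)
    (s : Finset (Fin (n + 1)) → V) (hs : s ∅ = 0)
    (T : Finset (Fin (n + 1))) (k : ℕ) (h : T.card = k + 1)
    (E : ℕ → Fin (n + 1)) (hE : ∀ ⦃i j : ℕ⦄, i < j → j ≤ k → E i < E j)
    (hT : T = seg E 0 k) (hEe : ∀ j : Fin (k + 1), E (j : ℕ) = T.orderEmbOfFin h j) :
    δ (δ s) T = ∑ m ∈ Finset.range (k + 1), ((-1 : R) ^ (m * (k + 1))) •
      (((∑ j ∈ Finset.range (m + 1), ((-1 : R) ^ j) • a ((seg E 0 m).erase (E j)))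
        + ∑ j ∈ Finset.range (m + 1), ((-1 : R) ^ (m * (j + 1))) •
            (a (seg E 0 j) * a (seg E j m)))
       (s (seg E m k))) := by
  rw [deltaN a δ hδ (δ s) T k h E hEe]
  -- the four double sums
  have hS1 : (∑ j ∈ Finset.range (k + 1), ((-1 : R) ^ j) • δ s (T.erase (E j)))
      = (∑ j ∈ Finset.range (k + 1), ∑ i ∈ Finset.range k,
          ((-1 : R) ^ (j + i)) • s ((T.erase (E j)).erase (punc E j i)))
        + ∑ j ∈ Finset.range (k + 1), ∑ i ∈ Finset.range k,
            ((-1 : R) ^ (j + (k - 1) * (i + 1))) •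
              a (seg (punc E j) 0 i) (s (seg (punc E j) i (k - 1))) := by
    rw [← Finset.sum_add_distrib]
    refine Finset.sum_congr rfl fun j hj => ?_
    rw [Finset.mem_range] at hj
    rw [expandA a δ hδ0 hδ s T k h E hE hT j (by omega), smul_add, Finset.smul_sum,
      Finset.smul_sum]
    congr 1
    · exact Finset.sum_congr rfl fun i _ => smul_smul_pow _ _ _
    · exact Finset.sum_congr rfl fun i _ => smul_smul_pow _ _ _
  have hS2 : (∑ j ∈ Finset.range (k + 1), ((-1 : R) ^ (k * (j + 1))) •
        a (seg E 0 j) (δ s (seg E j k)))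
      = (∑ j ∈ Finset.range (k + 1), ∑ i ∈ Finset.range (k - j + 1),
          ((-1 : R) ^ (k * (j + 1) + i)) •
            a (seg E 0 j) (s ((seg E j k).erase (E (j + i)))))
        + ∑ j ∈ Finset.range (k + 1), ∑ i ∈ Finset.range (k - j + 1),
            ((-1 : R) ^ (k * (j + 1) + (k - j) * (i + 1))) •
              a (seg E 0 j) (a (seg E j (j + i)) (s (seg E (j + i) k))) := by
    rw [← Finset.sum_add_distrib]
    refine Finset.sum_congr rfl fun j hj => ?_
    rw [Finset.mem_range] at hj
    rw [expandB a δ hδ s k E hE j (by omega), map_add, map_sum, map_sum, smul_add,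
      Finset.smul_sum, Finset.smul_sum]
    congr 1
    · refine Finset.sum_congr rfl fun i _ => ?_
      rw [map_smul, smul_smul_pow]
    · refine Finset.sum_congr rfl fun i _ => ?_
      rw [map_smul, smul_smul_pow]
  rw [hS1, hS2]
  -- X1 = 0 (the classical d∘d = 0 cancellation)
  have hC1 : (∑ j ∈ Finset.range (k + 1), ∑ i ∈ Finset.range k,
      ((-1 : R) ^ (j + i)) • s ((T.erase (E j)).erase (punc E j i))) = 0 := by
    rw [← Finset.sum_product']
    refine Finset.sum_involution
      (fun p _ => if p.2 < p.1 then (p.2, p.1 - 1) else (p.2 + 1, p.1)) ?_ ?_ ?_ ?_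
    · rintro ⟨j, i⟩ hp
      rw [Finset.mem_product, Finset.mem_range, Finset.mem_range] at hp
      by_cases hlt : i < j
      · simp only [if_pos hlt]
        have h1 : punc E j i = E i := by simp only [punc, if_pos hlt]
        have h2 : punc E i (j - 1) = E j := by
          simp only [punc, if_neg (by omega : ¬ (j - 1 < i))]
          congr 1
          omega
        rw [h1, h2, erase_erase_comm]
        exact smul_cancel (by omega) _
      · simp only [if_neg hlt]
        have h1 : punc E j i = E (i + 1) := by simp only [punc, if_neg hlt]
        have h2 : punc E (i + 1) j = E j := by
          simp only [punc, if_pos (by omega : j < i + 1)]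
        rw [h1, h2, erase_erase_comm]
        exact smul_cancel (by omega) _
    · rintro ⟨j, i⟩ hp hne
      by_cases hlt : i < j
      · simp only [if_pos hlt]
        intro heq
        rw [Prod.mk.injEq] at heq
        omega
      · simp only [if_neg hlt]
        intro heq
        rw [Prod.mk.injEq] at heq
        omega
    · rintro ⟨j, i⟩ hp
      rw [Finset.mem_product, Finset.mem_range, Finset.mem_range] at hp
      by_cases hlt : i < j
      · simp only [if_pos hlt]
        rw [Finset.mem_product, Finset.mem_range, Finset.mem_range]
        exact ⟨by omega, by omega⟩
      · simp only [if_neg hlt]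
        rw [Finset.mem_product, Finset.mem_range, Finset.mem_range]
        exact ⟨by omega, by omega⟩
    · rintro ⟨j, i⟩ hp
      by_cases hlt : i < j
      · simp only [if_pos hlt, if_neg (by omega : ¬ (j - 1 < i))]
        rw [Prod.mk.injEq]
        exact ⟨by omega, rfl⟩
      · simp only [if_neg hlt, if_pos (by omega : j < i + 1)]
        rw [Prod.mk.injEq]
        exact ⟨rfl, by omega⟩
  -- split X2 into the two kinds of terms
  have hX2split : (∑ j ∈ Finset.range (k + 1), ∑ i ∈ Finset.range k,
        ((-1 : R) ^ (j + (k - 1) * (i + 1))) •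
          a (seg (punc E j) 0 i) (s (seg (punc E j) i (k - 1))))
      = (∑ q ∈ Finset.range (k + 1), ∑ p ∈ Finset.range q,
          ((-1 : R) ^ (q + (k - 1) * (p + 1))) •
            a (seg E 0 p) (s ((seg E p k).erase (E q))))
        + ∑ m ∈ Finset.range (k + 1), ∑ j ∈ Finset.range m,
            ((-1 : R) ^ (j + (k - 1) * m)) •
              a ((seg E 0 m).erase (E j)) (s (seg E m k)) := by
    have step1 : ∀ j ∈ Finset.range (k + 1), (∑ i ∈ Finset.range k,
          ((-1 : R) ^ (j + (k - 1) * (i + 1))) •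
            a (seg (punc E j) 0 i) (s (seg (punc E j) i (k - 1))))
        = (∑ i ∈ Finset.range j, ((-1 : R) ^ (j + (k - 1) * (i + 1))) •
            a (seg E 0 i) (s ((seg E i k).erase (E j))))
          + ∑ i ∈ Finset.Ico (j + 1) (k + 1), ((-1 : R) ^ (j + (k - 1) * i)) •
              a ((seg E 0 i).erase (E j)) (s (seg E i k)) := by
      intro j hj
      rw [Finset.mem_range] at hj
      have hjk : j ≤ k := by omega
      rw [Finset.range_eq_Ico, ← Finset.sum_Ico_consecutive _ (Nat.zero_le j) hjk]
      congr 1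
      · rw [← Finset.range_eq_Ico]
        refine Finset.sum_congr rfl fun i hi => ?_
        rw [Finset.mem_range] at hi
        have hk1 : k = (k - 1) + 1 := by omega
        rw [punc_image_Icc_left hE hk1 hjk (by omega), if_pos hi,
          punc_image_Icc_right hE hk1 hjk (by omega), if_pos hi]
      · rw [← sum_Ico_shift (fun m => ((-1 : R) ^ (j + (k - 1) * m)) •
            a ((seg E 0 m).erase (E j)) (s (seg E m k))) j k]
        refine Finset.sum_congr rfl fun i hi => ?_
        rw [Finset.mem_Ico] at hi
        have hk1 : k = (k - 1) + 1 := by omega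
        rw [punc_image_Icc_left hE hk1 hjk (by omega), if_neg (by omega),
          punc_image_Icc_right hE hk1 hjk (by omega), if_neg (by omega)]
    rw [Finset.sum_congr rfl step1, Finset.sum_add_distrib]
    congr 1
    exact (tri1 (k + 1) fun j m => ((-1 : R) ^ (j + (k - 1) * m)) •
      a ((seg E 0 m).erase (E j)) (s (seg E m k))).symm
  -- split X3 into the two kinds of terms
  have hX3split : (∑ j ∈ Finset.range (k + 1), ∑ i ∈ Finset.range (k - j + 1),
        ((-1 : R) ^ (k * (j + 1) + i)) •
          a (seg E 0 j) (s ((seg E j k).erase (E (j + i)))))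
      = (∑ q ∈ Finset.range (k + 1), ∑ p ∈ Finset.range q,
          ((-1 : R) ^ (k * (p + 1) + (q - p))) •
            a (seg E 0 p) (s ((seg E p k).erase (E q))))
        + ∑ j ∈ Finset.range (k + 1), ((-1 : R) ^ (k * (j + 1))) •
            a (seg E 0 j) (s (seg E (j + 1) k)) := by
    have step1 : ∀ j ∈ Finset.range (k + 1), (∑ i ∈ Finset.range (k - j + 1),
          ((-1 : R) ^ (k * (j + 1) + i)) •
            a (seg E 0 j) (s ((seg E j k).erase (E (j + i)))))
        = (∑ m ∈ Finset.Ico (j + 1) (k + 1), ((-1 : R) ^ (k * (j + 1) + (m - j))) •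
            a (seg E 0 j) (s ((seg E j k).erase (E m))))
          + ((-1 : R) ^ (k * (j + 1))) • a (seg E 0 j) (s (seg E (j + 1) k)) := by
      intro j hj
      rw [Finset.mem_range] at hj
      have hjk : j ≤ k := by omega
      rw [Finset.sum_range_succ' (fun i => ((-1 : R) ^ (k * (j + 1) + i)) •
        a (seg E 0 j) (s ((seg E j k).erase (E (j + i))))) (k - j)]
      congr 1
      · rw [Finset.sum_Ico_eq_sum_range]
        simp only [Nat.add_sub_add_right]
        refine Finset.sum_congr rfl fun i hi => ?_
        have h1 : j + 1 + i - j = i + 1 := by omega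
        have h2 : j + (i + 1) = j + 1 + i := by omega
        rw [h1, h2]
      · simp only [Nat.add_zero]
        rw [seg_erase_bot hE hjk le_rfl]
    rw [Finset.sum_congr rfl step1, Finset.sum_add_distrib]
    congr 1
    exact (tri1 (k + 1) fun p q => ((-1 : R) ^ (k * (p + 1) + (q - p))) •
      a (seg E 0 p) (s ((seg E p k).erase (E q)))).symm
  -- X2a + X3b = 0
  have hC5 : ((∑ q ∈ Finset.range (k + 1), ∑ p ∈ Finset.range q,
        ((-1 : R) ^ (q + (k - 1) * (p + 1))) •
          a (seg E 0 p) (s ((seg E p k).erase (E q))))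
      + ∑ q ∈ Finset.range (k + 1), ∑ p ∈ Finset.range q,
          ((-1 : R) ^ (k * (p + 1) + (q - p))) •
            a (seg E 0 p) (s ((seg E p k).erase (E q)))) = 0 := by
    rw [← Finset.sum_add_distrib]
    refine Finset.sum_eq_zero fun q hq => ?_
    rw [← Finset.sum_add_distrib]
    refine Finset.sum_eq_zero fun p hp => ?_
    rw [Finset.mem_range] at hq hp
    exact smul_cancel (parityC5 hp (by omega)) _
  -- X2b + X3a = Yd
  have hC6 : ((∑ m ∈ Finset.range (k + 1), ∑ j ∈ Finset.range m,
        ((-1 : R) ^ (j + (k - 1) * m)) •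
          a ((seg E 0 m).erase (E j)) (s (seg E m k)))
      + ∑ j ∈ Finset.range (k + 1), ((-1 : R) ^ (k * (j + 1))) •
          a (seg E 0 j) (s (seg E (j + 1) k)))
      = ∑ m ∈ Finset.range (k + 1), ∑ j ∈ Finset.range (m + 1),
          ((-1 : R) ^ (m * (k + 1) + j)) •
            a ((seg E 0 m).erase (E j)) (s (seg E m k)) := by
    have hYdsplit : (∑ m ∈ Finset.range (k + 1), ∑ j ∈ Finset.range (m + 1),
          ((-1 : R) ^ (m * (k + 1) + j)) •
            a ((seg E 0 m).erase (E j)) (s (seg E m k)))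
        = (∑ m ∈ Finset.range (k + 1), ∑ j ∈ Finset.range m,
            ((-1 : R) ^ (m * (k + 1) + j)) •
              a ((seg E 0 m).erase (E j)) (s (seg E m k)))
          + ∑ m ∈ Finset.range (k + 1), ((-1 : R) ^ (m * (k + 1) + m)) •
              a ((seg E 0 m).erase (E m)) (s (seg E m k)) := by
      rw [← Finset.sum_add_distrib]
      exact Finset.sum_congr rfl fun m _ => Finset.sum_range_succ _ _
    rw [hYdsplit]
    congr 1
    · refine Finset.sum_congr rfl fun m hm => Finset.sum_congr rfl fun j hj => ?_
      rw [Finset.mem_range] at hm hj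
      rw [neg_one_pow_congr (parityC6off hj (by omega))]
    · rw [Finset.sum_range_succ, Finset.sum_range_succ'
        (fun m => ((-1 : R) ^ (m * (k + 1) + m)) •
          a ((seg E 0 m).erase (E m)) (s (seg E m k))) k]
      have hlast : ((-1 : R) ^ (k * (k + 1))) •
          a (seg E 0 k) (s (seg E (k + 1) k)) = 0 := by
        rw [seg_empty (p := k + 1) (q := k) (by omega), hs, map_zero, smul_zero]
      have hfirst : ((-1 : R) ^ (0 * (k + 1) + 0)) •
          a ((seg E 0 0).erase (E 0)) (s (seg E 0 k)) = 0 := by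
        rw [seg_erase_bot hE le_rfl (Nat.zero_le k), seg_empty (p := 1) (q := 0) (by omega),
          ha, LinearMap.zero_apply, smul_zero]
      rw [hlast, hfirst, add_zero, add_zero]
      refine Finset.sum_congr rfl fun j hj => ?_
      rw [Finset.mem_range] at hj
      rw [seg_erase_top hE (by omega) (by omega)]
      simp only [Nat.add_sub_cancel]
      rw [neg_one_pow_congr (parityC6diag j k)]
  -- X4 = Ya
  have hC2 : (∑ j ∈ Finset.range (k + 1), ∑ i ∈ Finset.range (k - j + 1),
        ((-1 : R) ^ (k * (j + 1) + (k - j) * (i + 1))) •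
          a (seg E 0 j) (a (seg E j (j + i)) (s (seg E (j + i) k))))
      = ∑ m ∈ Finset.range (k + 1), ∑ j ∈ Finset.range (m + 1),
          ((-1 : R) ^ (m * (k + 1) + m * (j + 1))) •
            a (seg E 0 j) (a (seg E j m) (s (seg E m k))) := by
    have step1 : ∀ j ∈ Finset.range (k + 1), (∑ i ∈ Finset.range (k - j + 1),
          ((-1 : R) ^ (k * (j + 1) + (k - j) * (i + 1))) •
            a (seg E 0 j) (a (seg E j (j + i)) (s (seg E (j + i) k))))
        = ∑ m ∈ Finset.Ico j (k + 1),
            ((-1 : R) ^ (k * (j + 1) + (k - j) * (m - j + 1))) •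
              a (seg E 0 j) (a (seg E j m) (s (seg E m k))) := by
      intro j hj
      rw [Finset.mem_range] at hj
      rw [Finset.sum_Ico_eq_sum_range]
      have hkj : k + 1 - j = k - j + 1 := by omega
      rw [hkj]
      refine Finset.sum_congr rfl fun i hi => ?_
      have h1 : j + i - j = i := by omega
      rw [h1]
    rw [Finset.sum_congr rfl step1, ← tri2 (k + 1) fun j m =>
      ((-1 : R) ^ (k * (j + 1) + (k - j) * (m - j + 1))) •
        a (seg E 0 j) (a (seg E j m) (s (seg E m k)))]
    refine Finset.sum_congr rfl fun m hm => Finset.sum_congr rfl fun j hj => ?_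
    rw [Finset.mem_range] at hm hj
    rw [neg_one_pow_congr (parityC2 (by omega) (by omega))]
  -- the right-hand side, distributed
  have hY : (∑ m ∈ Finset.range (k + 1), ((-1 : R) ^ (m * (k + 1))) •
        (((∑ j ∈ Finset.range (m + 1), ((-1 : R) ^ j) • a ((seg E 0 m).erase (E j)))
          + ∑ j ∈ Finset.range (m + 1), ((-1 : R) ^ (m * (j + 1))) •
              (a (seg E 0 j) * a (seg E j m)))
         (s (seg E m k))))
      = (∑ m ∈ Finset.range (k + 1), ∑ j ∈ Finset.range (m + 1),
          ((-1 : R) ^ (m * (k + 1) + j)) •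
            a ((seg E 0 m).erase (E j)) (s (seg E m k)))
        + ∑ m ∈ Finset.range (k + 1), ∑ j ∈ Finset.range (m + 1),
            ((-1 : R) ^ (m * (k + 1) + m * (j + 1))) •
              a (seg E 0 j) (a (seg E j m) (s (seg E m k))) := by
    rw [← Finset.sum_add_distrib]
    refine Finset.sum_congr rfl fun m hm => ?_
    rw [LinearMap.add_apply, smul_add, LinearMap.sum_apply, LinearMap.sum_apply,
      Finset.smul_sum, Finset.smul_sum]
    congr 1
    · refine Finset.sum_congr rfl fun j _ => ?_
      rw [LinearMap.smul_apply, smul_smul_pow]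
    · refine Finset.sum_congr rfl fun j _ => ?_
      rw [LinearMap.smul_apply, Module.End.mul_apply, smul_smul_pow]
  rw [hY, hC1, zero_add, hX2split, hX3split, hC2]
  set A := ∑ q ∈ Finset.range (k + 1), ∑ p ∈ Finset.range q,
      ((-1 : R) ^ (q + (k - 1) * (p + 1))) •
        a (seg E 0 p) (s ((seg E p k).erase (E q))) with hA
  set B := ∑ m ∈ Finset.range (k + 1), ∑ j ∈ Finset.range m,
      ((-1 : R) ^ (j + (k - 1) * m)) •
        a ((seg E 0 m).erase (E j)) (s (seg E m k)) with hB
  set C := ∑ q ∈ Finset.range (k + 1), ∑ p ∈ Finset.range q,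
      ((-1 : R) ^ (k * (p + 1) + (q - p))) •
        a (seg E 0 p) (s ((seg E p k).erase (E q))) with hC
  set D := ∑ j ∈ Finset.range (k + 1), ((-1 : R) ^ (k * (j + 1))) •
      a (seg E 0 j) (s (seg E (j + 1) k)) with hD
  set F := ∑ m ∈ Finset.range (k + 1), ∑ j ∈ Finset.range (m + 1),
      ((-1 : R) ^ (m * (k + 1) + m * (j + 1))) •
        a (seg E 0 j) (a (seg E j m) (s (seg E m k))) with hF
  set G := ∑ m ∈ Finset.range (k + 1), ∑ j ∈ Finset.range (m + 1),
      ((-1 : R) ^ (m * (k + 1) + j)) •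
        a ((seg E 0 m).erase (E j)) (s (seg E m k)) with hG
  have hre : (A + B) + ((C + D) + F) = (A + C) + ((B + D) + F) := by abel
  rw [hre, hC5, hC6, zero_add]

end master

lemma rhs_eq (a : Finset (Fin (n + 1)) → Module.End R V)
    (T : Finset (Fin (n + 1))) (k : ℕ) (h : T.card = k + 1) :
    ((∑ j : Fin (k + 1), ((-1 : R) ^ (j : ℕ)) • a (T.erase (T.orderEmbOfFin h j)))
      + ∑ j : Fin (k + 1), ((-1 : R) ^ (k * ((j : ℕ) + 1))) •
          (a ((Finset.Iic j).image (fun i => T.orderEmbOfFin h i)) *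
           a ((Finset.Ici j).image (fun i => T.orderEmbOfFin h i))))
    = (∑ j ∈ Finset.range (k + 1), ((-1 : R) ^ j) • a (T.erase (embN T h j)))
      + ∑ j ∈ Finset.range (k + 1), ((-1 : R) ^ (k * (j + 1))) •
          (a (seg (embN T h) 0 j) * a (seg (embN T h) j k)) := by
  congr 1
  · rw [← Fin.sum_univ_eq_sum_range
      (fun j => ((-1 : R) ^ j) • a (T.erase (embN T h j))) (k + 1)]
    exact Finset.sum_congr rfl fun j _ => by rw [embN_eq]
  · rw [← Fin.sum_univ_eq_sum_range
      (fun j => ((-1 : R) ^ (k * (j + 1))) •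
        (a (seg (embN T h) 0 j) * a (seg (embN T h) j k))) (k + 1)]
    refine Finset.sum_congr rfl fun j _ => ?_
    rw [image_Iic_eq_seg, image_Ici_eq_seg]

lemma embN_seg {k : ℕ} {E : ℕ → Fin (n + 1)}
    (hE : ∀ ⦃i j : ℕ⦄, i < j → j ≤ k → E i < E j)
    {m : ℕ} (hm : m ≤ k) (hS : (seg E 0 m).card = m + 1) {x : ℕ} (hx : x ≤ m) :
    embN (seg E 0 m) hS x = E x := by
  have hE' : ∀ ⦃i j : ℕ⦄, i < j → j ≤ m → E i < E j :=
    fun i j hij hj => hE hij (le_trans hj hm)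
  have key := seg_emb hE' (Nat.zero_le m) le_rfl hS ⟨min x m, by omega⟩
  unfold embN
  refine key.trans (congrArg E ?_)
  simp only [Fin.val_mk]
  omega

end SSC

/-- Flatness of the simplicial superconnection is equivalent to the quadratic
relations. Here `a` assigns to every subset `T ⊆ {0,…,n}` an endomorphism `a T`
with `a ∅ = 0`, and `δ` is the coboundary operator on `V`-valued functions `s`
on subsets (with `s ∅ = 0`): for `T` with elements `t_0 < ⋯ < t_k`,
`(δ s) T = ∑_j (−1)^j s (T \ {t_j}) + ∑_j (−1)^{k(j−1)} a({t_0,…,t_j}) (s({t_j,…,t_k}))`.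
The sign `(−1)^{k(j−1)}` is encoded as `(−1)^{k(j+1)}`, which has the same parity.
Then `δ ∘ δ = 0` iff `a` satisfies the flatness relations
`0 = ∑_j (−1)^j a (T \ {t_j}) + ∑_j (−1)^{k(j−1)} a({t_0,…,t_j}) ∘ a({t_j,…,t_k})`. -/
theorem simplicial_superconnection_flat_iff
    (n : ℕ) (R : Type*) [CommRing R] (V : Type*) [AddCommGroup V] [Module R V]
    (a : Finset (Fin (n + 1)) → Module.End R V) (ha : a ∅ = 0)
    (δ : (Finset (Fin (n + 1)) → V) → (Finset (Fin (n + 1)) → V))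
    (hδ0 : ∀ s : Finset (Fin (n + 1)) → V, δ s ∅ = 0)
    (hδ : ∀ (s : Finset (Fin (n + 1)) → V) (T : Finset (Fin (n + 1))) (k : ℕ)
        (h : T.card = k + 1),
      δ s T =
        (∑ j : Fin (k + 1), ((-1 : R) ^ (j : ℕ)) •
            s (T.erase (T.orderEmbOfFin h j)))
        + ∑ j : Fin (k + 1), ((-1 : R) ^ (k * ((j : ℕ) + 1))) •
            (a ((Finset.Iic j).image (fun i => T.orderEmbOfFin h i))
              (s ((Finset.Ici j).image (fun i => T.orderEmbOfFin h i))))) :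
    (∀ s : Finset (Fin (n + 1)) → V, s ∅ = 0 → δ (δ s) = 0) ↔
    (∀ (T : Finset (Fin (n + 1))) (k : ℕ) (h : T.card = k + 1),
      (0 : Module.End R V) =
        (∑ j : Fin (k + 1), ((-1 : R) ^ (j : ℕ)) •
            a (T.erase (T.orderEmbOfFin h j)))
        + ∑ j : Fin (k + 1), ((-1 : R) ^ (k * ((j : ℕ) + 1))) •
            (a ((Finset.Iic j).image (fun i => T.orderEmbOfFin h i)) *
             a ((Finset.Ici j).image (fun i => T.orderEmbOfFin h i)))) := by
  classical
  constructor
  · -- flatness implies the quadratic relations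
    intro hflat T k h
    have hE := SSC.embN_strict T h
    have hT := SSC.T_eq_seg T h
    have key : ∀ v : V,
        ((∑ j ∈ Finset.range (k + 1), ((-1 : R) ^ j) •
            a ((SSC.seg (SSC.embN T h) 0 k).erase (SSC.embN T h j)))
          + ∑ j ∈ Finset.range (k + 1), ((-1 : R) ^ (k * (j + 1))) •
              (a (SSC.seg (SSC.embN T h) 0 j) * a (SSC.seg (SSC.embN T h) j k))) v = 0 := by
      intro v
      set E := SSC.embN T h with hEdef
      set s₀ : Finset (Fin (n + 1)) → V := fun S => if S = SSC.seg E k k then v else 0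
        with hs₀def
      have hs0 : s₀ ∅ = 0 := by
        rw [hs₀def]
        simp only
        rw [if_neg]
        intro hcontra
        have hmem : E k ∈ SSC.seg E k k := SSC.mem_seg.2 ⟨k, le_rfl, le_rfl, rfl⟩
        rw [← hcontra] at hmem
        exact absurd hmem (Finset.notMem_empty _)
      have hm := SSC.master a δ hδ0 hδ ha s₀ hs0 T k h E hE hT
        (fun j => (SSC.embN_eq T h j).symm)
      rw [hflat s₀ hs0] at hm
      rw [Pi.zero_apply] at hm
      rw [Finset.sum_eq_single_of_mem k (Finset.self_mem_range_succ k) ?side] at hm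
      · have hv : s₀ (SSC.seg E k k) = v := if_pos rfl
        rw [hv, (Nat.even_mul_succ_self k).neg_one_pow, one_smul] at hm
        exact hm.symm
      · intro m hmr hmk
        rw [Finset.mem_range] at hmr
        have hne : SSC.seg E m k ≠ SSC.seg E k k := by
          intro heq
          have h1 := SSC.seg_card hE (by omega : m ≤ k) le_rfl
          have h2 := SSC.seg_card hE le_rfl le_rfl
          rw [heq, h2] at h1
          omega
        have hz : s₀ (SSC.seg E m k) = 0 := if_neg hne
        rw [hz, map_zero, smul_zero]
    rw [SSC.rhs_eq a T k h]
    rw [← hT] at key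
    refine ((LinearMap.ext fun v => ?_) :
      _ = (0 : Module.End R V)).symm
    rw [LinearMap.zero_apply]
    exact key v
  · -- the quadratic relations imply flatness
    intro hrel s hs
    funext S
    show δ (δ s) S = 0
    by_cases hS : S = ∅
    · rw [hS]
      exact hδ0 (δ s)
    · have hcard : S.card ≠ 0 := by simpa [Finset.card_eq_zero] using hS
      obtain ⟨k, hk⟩ := Nat.exists_eq_succ_of_ne_zero hcard
      have hE := SSC.embN_strict S hk
      rw [SSC.master a δ hδ0 hδ ha s hs S k hk (SSC.embN S hk) hE (SSC.T_eq_seg S hk)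
        (fun j => (SSC.embN_eq S hk j).symm)]
      refine Finset.sum_eq_zero fun m hm => ?_
      rw [Finset.mem_range] at hm
      have hm' : m ≤ k := by omega
      have hScard : (SSC.seg (SSC.embN S hk) 0 m).card = m + 1 := by
        rw [SSC.seg_card hE (Nat.zero_le m) hm']
        omega
      have h0 := hrel (SSC.seg (SSC.embN S hk) 0 m) m hScard
      rw [SSC.rhs_eq a (SSC.seg (SSC.embN S hk) 0 m) m hScard] at h0
      have hEE : ∀ x, x ≤ m →
          SSC.embN (SSC.seg (SSC.embN S hk) 0 m) hScard x = SSC.embN S hk x :=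
        fun x hx => SSC.embN_seg hE hm' hScard hx
      have e1 : (∑ j ∈ Finset.range (m + 1), ((-1 : R) ^ j) •
            a ((SSC.seg (SSC.embN S hk) 0 m).erase
              (SSC.embN (SSC.seg (SSC.embN S hk) 0 m) hScard j)))
          = ∑ j ∈ Finset.range (m + 1), ((-1 : R) ^ j) •
              a ((SSC.seg (SSC.embN S hk) 0 m).erase (SSC.embN S hk j)) := by
        refine Finset.sum_congr rfl fun j hj => ?_
        rw [Finset.mem_range] at hj
        rw [hEE j (by omega)]
      have e2 : (∑ j ∈ Finset.range (m + 1), ((-1 : R) ^ (m * (j + 1))) •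
            (a (SSC.seg (SSC.embN (SSC.seg (SSC.embN S hk) 0 m) hScard) 0 j) *
             a (SSC.seg (SSC.embN (SSC.seg (SSC.embN S hk) 0 m) hScard) j m)))
          = ∑ j ∈ Finset.range (m + 1), ((-1 : R) ^ (m * (j + 1))) •
              (a (SSC.seg (SSC.embN S hk) 0 j) * a (SSC.seg (SSC.embN S hk) j m)) := by
        refine Finset.sum_congr rfl fun j hj => ?_
        rw [Finset.mem_range] at hj
        rw [SSC.seg_congr (fun x h1 h2 => hEE x (by omega)),
          SSC.seg_congr (E := fun x => SSC.embN (SSC.seg (SSC.embN S hk) 0 m) hScard x)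
            (fun x h1 h2 => hEE x (by omega))]
      rw [e1, e2] at h0
      rw [← h0, LinearMap.zero_apply, smul_zero]
end
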